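/- arXiv:1106.0111 — 6 statements merged into one kernel-verified Lean document; each statement's English description precedes it below -/
import Mathlib

section
/- If a bounded continuous function f : ℝ → ℝ has a d-horseshoe (for some integer d ≥ 1), then the topological entropy of f satisfies h_top(f) ≥ log d. -/
/-!
Pulling the intervals of a `d`-horseshoe back along words of length `n` (intermediate value
theorem) gives a `d ^ n`-horseshoe of `f^[n]` whose intervals have disjoint interiors. Dropping
every other one leaves at least `d ^ n / 2` pairwise disjoint, hence uniformly separated,
intervals, and points with distinct itineraries through them form dynamical nets of size
`(d ^ n / 2) ^ N` at time `n * N`. So `n * h_top f ≥ n * log d - log 2` for every `n`.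
-/

open BoundedContinuousFunction

/-- The topological entropy of `f : ℝ → ℝ`, defined as the (Bowen/cover) topological
entropy of `f` on the closure of its image. -/
noncomputable def htop (f : ℝ → ℝ) : EReal :=
  Dynamics.coverEntropy f (closure (Set.range f))

/-- `f` has a `d`-horseshoe: there are `d` nondegenerate compact intervals with pairwise
disjoint interiors, each of whose images under `f` contains all of them. -/
def HasHorseshoe (f : ℝ → ℝ) (d : ℕ) : Prop :=
  ∃ I : Fin d → ℝ × ℝ,
    (∀ i, (I i).1 < (I i).2) ∧
    (∀ i j, i ≠ j →
      Disjoint (interior (Set.Icc (I i).1 (I i).2)) (interior (Set.Icc (I j).1 (I j).2))) ∧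
    (∀ i j, Set.Icc (I j).1 (I j).2 ⊆ f '' Set.Icc (I i).1 (I i).2)

open Set Filter Function Uniformity UniformSpace Dynamics ExpGrowth

theorem image_Ioo_subset_uIoo {f : ℝ → ℝ} {a b : ℝ} (hf : ContinuousOn f (Icc a b))
    (ha : ∀ x ∈ Ioc a b, f x ≠ f a) (hb : ∀ x ∈ Ico a b, f x ≠ f b) :
    f '' Ioo a b ⊆ uIoo (f a) (f b) := by
  rintro _ ⟨x, hx, rfl⟩
  have hxab : x ∈ Icc a b := Ioo_subset_Icc_self hx
  have hab : a ≤ b := hx.1.le.trans hx.2.le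
  have hfa : f a ∉ uIcc (f x) (f b) := fun h ↦ by
    obtain ⟨y, hy, hfy⟩ := intermediate_value_uIcc (hf.mono (uIcc_subset_Icc hxab ⟨hab, le_rfl⟩)) h
    rw [uIcc_of_le hx.2.le] at hy
    exact ha y ⟨hx.1.trans_le hy.1, hy.2⟩ hfy
  have hfb : f b ∉ uIcc (f a) (f x) := fun h ↦ by
    obtain ⟨y, hy, hfy⟩ := intermediate_value_uIcc (hf.mono (uIcc_subset_Icc ⟨le_rfl, hab⟩ hxab)) h
    rw [uIcc_of_le hx.1.le] at hy
    exact hb y ⟨hy.1, hy.2.trans_lt hx.2⟩ hfy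
  simp only [mem_uIcc, not_or, not_and_or, not_le] at hfa hfb
  simp only [uIoo, mem_Ioo, inf_lt_iff, lt_sup_iff]
  grind

theorem exists_subinterval_of_Icc_subset_image {f : ℝ → ℝ} {a b c d : ℝ}
    (hf : ContinuousOn f (Icc a b)) (hcd : c < d) (h : Icc c d ⊆ f '' Icc a b) :
    ∃ a' b', a ≤ a' ∧ a' < b' ∧ b' ≤ b ∧
      Icc c d ⊆ f '' Icc a' b' ∧ f '' Ioo a' b' ⊆ Ioo c d := by
  obtain ⟨u, hu, hfu⟩ := h (left_mem_Icc.2 hcd.le)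
  obtain ⟨v, hv, hfv⟩ := h (right_mem_Icc.2 hcd.le)
  obtain ⟨p, q, hap, hpq, hqb, hIcc, hIoo⟩ : ∃ p q, a ≤ p ∧ p ≤ q ∧ q ≤ b ∧
      uIcc (f p) (f q) = Icc c d ∧ uIoo (f p) (f q) = Ioo c d := by
    rcases le_total u v with huv | hvu
    · exact ⟨u, v, hu.1, huv, hv.2, by simp [hfu, hfv, hcd.le], by simp [hfu, hfv, hcd.le]⟩
    · exact ⟨v, u, hv.1, hvu, hu.2, by simp [hfu, hfv, hcd.le], by simp [hfu, hfv, hcd.le]⟩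
  have hfpq : f p ≠ f q := fun h ↦ by
    rw [h, uIcc_self, eq_comm, Icc_eq_singleton_iff] at hIcc
    exact hcd.ne (hIcc.1.trans hIcc.2.symm)
  have hf' : ContinuousOn f (Icc p q) := hf.mono (Icc_subset_Icc hap hqb)
  -- `a'` is the last visit of `f p` in `[p, q]` and `b'` the first visit of `f q` after `a'`,
  -- so on `(a', b')` the function takes neither value and stays strictly between them.
  obtain ⟨a', ⟨⟨hpa', ha'q⟩, hfa'⟩, ha'max⟩ : ∃ a', IsGreatest (Icc p q ∩ f ⁻¹' {f p}) a' :=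
    (isCompact_Icc.of_isClosed_subset
      (hf'.preimage_isClosed_of_isClosed isClosed_Icc isClosed_singleton)
      inter_subset_left).exists_isGreatest ⟨p, ⟨le_rfl, hpq⟩, rfl⟩
  obtain ⟨b', ⟨⟨ha'b', hb'q⟩, hfb'⟩, hb'min⟩ : ∃ b', IsLeast (Icc a' q ∩ f ⁻¹' {f q}) b' :=
    (isCompact_Icc.of_isClosed_subset
      ((hf'.mono (Icc_subset_Icc hpa' le_rfl)).preimage_isClosed_of_isClosed isClosed_Icc
        isClosed_singleton) inter_subset_left).exists_isLeast ⟨q, ⟨ha'q, le_rfl⟩, rfl⟩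
  simp only [mem_preimage, mem_singleton_iff] at hfa' hfb'
  have hlt : a' < b' := ha'b'.lt_of_ne fun h ↦ hfpq (by rw [← hfa', ← hfb', h])
  have hcont : ContinuousOn f (Icc a' b') := hf'.mono (Icc_subset_Icc hpa' hb'q)
  refine ⟨a', b', hap.trans hpa', hlt, hb'q.trans hqb, ?_, ?_⟩
  · rw [← hIcc, ← hfa', ← hfb', ← uIcc_of_le hlt.le]
    exact intermediate_value_uIcc (by rwa [uIcc_of_le hlt.le])
  · rw [← hIoo, ← hfa', ← hfb']
    refine image_Ioo_subset_uIoo hcont (fun x hx hfx ↦ ?_) (fun x hx hfx ↦ ?_)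
    · exact hx.1.not_ge (ha'max ⟨⟨hpa'.trans hx.1.le, hx.2.trans hb'q⟩, hfx.trans hfa'⟩)
    · exact hx.2.not_ge (hb'min ⟨⟨hx.1, hx.2.le.trans hb'q⟩, hfx.trans hfb'⟩)

section Selection

variable {α ι : Type*} [LinearOrder α] [DenselyOrdered α] {a b : ι → α}

theorem le_left_of_disjoint_Ioo_of_right_le {i j : ι} (hi : a i < b i)
    (hij : Disjoint (Ioo (a i) (b i)) (Ioo (a j) (b j))) (hb : b i ≤ b j) : b i ≤ a j := by
  rw [Ioo_disjoint_Ioo, min_eq_left hb, le_max_iff] at hij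
  exact hij.resolve_left hi.not_ge

theorem card_filter_left_eq_le_one (T : Finset ι) (hab : ∀ i ∈ T, a i < b i)
    (hT : (T : Set ι).Pairwise fun i j ↦ Disjoint (Ioo (a i) (b i)) (Ioo (a j) (b j))) (x : α) :
    (T.filter fun j ↦ a j = x).card ≤ 1 := by
  refine Finset.card_le_one.2 fun j hj k hk ↦ by_contra fun hjk ↦ ?_
  rw [Finset.mem_filter] at hj hk
  have hjk' : Disjoint (Ioo (a j) (b j)) (Ioo (a k) (b k)) := hT hj.1 hk.1 hjk
  rw [Ioo_disjoint_Ioo, hj.2, hk.2, max_self, min_le_iff] at hjk'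
  have := hab j hj.1
  have := hab k hk.1
  grind

theorem Finset.exists_subset_pairwise_disjoint_Icc [DecidableEq ι] (T : Finset ι)
    (hab : ∀ i ∈ T, a i < b i)
    (hT : (T : Set ι).Pairwise fun i j ↦ Disjoint (Set.Ioo (a i) (b i)) (Set.Ioo (a j) (b j))) :
    ∃ S ⊆ T, T.card ≤ 2 * S.card ∧
      (S : Set ι).Pairwise fun i j ↦ Disjoint (Set.Icc (a i) (b i)) (Set.Icc (a j) (b j)) := by
  induction T using Finset.strongInduction with
  | H T ih =>
  rcases T.eq_empty_or_nonempty with rfl | hne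
  · exact ⟨∅, empty_subset _, by simp, by simp⟩
  -- Only the interval starting where the leftmost-ending interval `i` ends can touch it:
  -- keep `i` and recurse on the intervals lying strictly to its right.
  obtain ⟨i, hiT, hmin⟩ := T.exists_min_image b hne
  set R := T.filter fun j ↦ b i < a j
  have hRT : R ⊂ T := filter_ssubset.2 ⟨i, hiT, (hab i hiT).not_gt⟩
  obtain ⟨S, hSR, hcard, hS⟩ := ih R hRT (fun j hj ↦ hab j (hRT.subset hj))
    (hT.mono (coe_subset.2 hRT.subset))
  have hiS : i ∉ S := fun h ↦ (hab i hiT).not_gt (mem_filter.1 (hSR h)).2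
  have hrest : T.filter (fun j ↦ ¬ b i < a j) ⊆ insert i (T.filter fun j ↦ a j = b i) := by
    intro j hj
    rw [mem_filter, not_lt] at hj
    rw [mem_insert, mem_filter]
    by_cases hji : j = i
    · exact .inl hji
    · exact .inr ⟨hj.1, hj.2.antisymm (le_left_of_disjoint_Ioo_of_right_le (hab i hiT)
        (hT hiT hj.1 (Ne.symm hji)) (hmin j hj.1))⟩
  refine ⟨insert i S, insert_subset hiT (hSR.trans hRT.subset), ?_, ?_⟩
  · have hsplit : R.card + (T.filter fun j ↦ ¬ b i < a j).card = T.card :=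
      card_filter_add_card_filter_not _
    have htouch := card_filter_left_eq_le_one T hab hT (b i)
    have hrest' := (card_le_card hrest).trans (card_insert_le _ _)
    rw [card_insert_of_notMem hiS]
    omega
  · rw [coe_insert, Set.pairwise_insert_of_symm]
    refine ⟨hS, fun j hj _ ↦ ?_⟩
    exact (Set.Iic_disjoint_Ioi le_rfl).mono Set.Icc_subset_Iic_self
      (Set.Icc_subset_Ici_self.trans (Set.Ici_subset_Ioi.2 (mem_filter.1 (hSR hj)).2))

end Selection

theorem Icc_subset_Icc_of_Ioo_subset_Ioo {α : Type*} [LinearOrder α] [DenselyOrdered α]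
    {a b c d : α} (hab : a < b) (h : Ioo a b ⊆ Ioo c d) :
    Icc a b ⊆ Icc c d :=
  Icc_subset_Icc ((Ioo_subset_Ioo_iff hab).1 h).1 ((Ioo_subset_Ioo_iff hab).1 h).2

structure IsHorseshoe {ι : Type*} (g : ℝ → ℝ) (a b : ι → ℝ) : Prop where
  lt : ∀ i, a i < b i
  pairwise_disjoint_Ioo : Pairwise fun i j ↦ Disjoint (Ioo (a i) (b i)) (Ioo (a j) (b j))
  Icc_subset_image : ∀ i j, Icc (a j) (b j) ⊆ g '' Icc (a i) (b i)

def IsCylinder {ι : Type*} (g : ℝ → ℝ) (a b : ι → ℝ) {n : ℕ} (w : Fin (n + 1) → ι) (c d : ℝ) :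
    Prop :=
  c < d ∧ (∀ k : Fin (n + 1), g^[k] '' Ioo c d ⊆ Ioo (a (w k)) (b (w k))) ∧
    ∀ j, Icc (a j) (b j) ⊆ g^[n + 1] '' Icc c d

namespace IsHorseshoe

variable {ι : Type*} {g : ℝ → ℝ} {a b : ι → ℝ}

theorem exists_isCylinder (hg : Continuous g) (h : IsHorseshoe g a b) :
    ∀ {n : ℕ} (w : Fin (n + 1) → ι), ∃ c d, IsCylinder g a b w c d
  | 0, w => ⟨a (w 0), b (w 0), h.lt _, fun k ↦ by simp [Fin.fin_one_eq_zero k],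
      fun j ↦ by simpa using h.Icc_subset_image (w 0) j⟩
  | n + 1, w => by
    obtain ⟨c, d, hcd, hIoo, hIcc⟩ := exists_isCylinder hg h (Fin.tail w)
    have hsub : Icc c d ⊆ g '' Icc (a (w 0)) (b (w 0)) :=
      (Icc_subset_Icc_of_Ioo_subset_Ioo hcd (by simpa [Fin.tail] using hIoo 0)).trans
        (h.Icc_subset_image (w 0) (w 1))
    obtain ⟨c', d', hc', hcd', hd', hcov, hmaps⟩ :=
      exists_subinterval_of_Icc_subset_image hg.continuousOn hcd hsub
    refine ⟨c', d', hcd', fun k ↦ ?_, fun j ↦ ?_⟩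
    · induction k using Fin.cases with
      | zero => simpa using Ioo_subset_Ioo hc' hd'
      | succ k =>
        rw [Fin.val_succ, iterate_succ, image_comp]
        exact (image_mono hmaps).trans (hIoo k)
    · rw [iterate_succ, image_comp]
      exact (hIcc j).trans (image_mono hcov)

theorem iterate (hg : Continuous g) (h : IsHorseshoe g a b) (n : ℕ) :
    ∃ a' b' : (Fin (n + 1) → ι) → ℝ, IsHorseshoe g^[n + 1] a' b' ∧
      ∀ w, Icc (a' w) (b' w) ⊆ Icc (a (w 0)) (b (w 0)) := by
  choose a' b' hlt hIoo hIcc using fun w : Fin (n + 1) → ι ↦ h.exists_isCylinder hg w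
  have hsub : ∀ w, Icc (a' w) (b' w) ⊆ Icc (a (w 0)) (b (w 0)) := fun w ↦
    Icc_subset_Icc_of_Ioo_subset_Ioo (hlt w) (by simpa using hIoo w 0)
  refine ⟨a', b', ⟨hlt, fun w w' hww' ↦ ?_, fun w w' ↦ (hsub w').trans (hIcc w _)⟩, hsub⟩
  obtain ⟨k, hk⟩ := ne_iff.1 hww'
  exact (h.pairwise_disjoint_Ioo hk).preimage g^[k] |>.mono
    (image_subset_iff.1 (hIoo w k)) (image_subset_iff.1 (hIoo w' k))

end IsHorseshoe

theorem exists_mem_uniformity_pairwise_disjoint_thickening {X ι : Type*} [UniformSpace X]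
    [T2Space X] [Finite ι] {K : ι → Set X} (hK : ∀ i, IsCompact (K i))
    (hdisj : Pairwise (Disjoint on K)) :
    ∃ V ∈ 𝓤 X, Pairwise (Disjoint on fun i ↦ ⋃ x ∈ K i, ball x V) := by
  have : ∀ᶠ V in (𝓤 X).smallSets, Pairwise (Disjoint on fun i ↦ ⋃ x ∈ K i, ball x V) := by
    refine eventually_all.2 fun i ↦ eventually_all.2 fun j ↦
      eventually_imp_distrib_left.2 fun hij ↦ ?_
    obtain ⟨V, hV, hVdisj⟩ := (hdisj hij).exists_uniform_thickening (hK i) (hK j).isClosed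
    exact (eventually_smallSets' fun W V hWV h ↦
      h.mono (iUnion₂_mono fun x _ ↦ ball_mono hWV x) (iUnion₂_mono fun x _ ↦ ball_mono hWV x)).2
      ⟨V, hV, hVdisj⟩
  obtain ⟨V, hV, hVdisj⟩ := eventually_smallSets.1 this
  exact ⟨V, hV, hVdisj V subset_rfl⟩

theorem exists_forall_iterate_mem_of_subset_image {X ι : Type*} {g : X → X} {K : ι → Set X}
    (hK : ∀ i, (K i).Nonempty) (hcov : ∀ i j, K j ⊆ g '' K i) :
    ∀ {n : ℕ} (w : Fin (n + 1) → ι), ∃ x, ∀ k : Fin (n + 1), g^[k] x ∈ K (w k)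
  | 0, w => let ⟨x, hx⟩ := hK (w 0); ⟨x, fun k ↦ by simpa [Fin.fin_one_eq_zero k] using hx⟩
  | n + 1, w => by
    obtain ⟨y, hy⟩ := exists_forall_iterate_mem_of_subset_image hK hcov (Fin.tail w)
    obtain ⟨x, hx, rfl⟩ := hcov (w 0) (w 1) (by simpa [Fin.tail] using hy 0)
    refine ⟨x, fun k ↦ ?_⟩
    induction k using Fin.cases with
    | zero => simpa using hx
    | succ k => simpa [iterate_succ_apply, Fin.tail] using hy k

namespace Dynamics

variable {X ι : Type*} [UniformSpace X] [Fintype ι] {f : X → X} {F : Set X} {K : ι → Set X}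
  {P : ℕ}

theorem card_pow_le_netMaxcard {V : SetRel X X} (hP : P ≠ 0) (hV : V ∈ 𝓤 X)
    (hVdisj : Pairwise (Disjoint on fun i ↦ ⋃ x ∈ K i, ball x V)) (hne : ∀ i, (K i).Nonempty)
    (hKF : ∀ i, K i ⊆ F) (hcov : ∀ i j, K j ⊆ f^[P] '' K i) (n : ℕ) :
    (Fintype.card ι ^ (n + 1) : ℕ∞) ≤ netMaxcard f F V (P * (n + 1)) := by
  classical
  choose x hx using fun w : Fin (n + 1) → ι ↦ exists_forall_iterate_mem_of_subset_image hne hcov w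
  simp only [← iterate_mul] at hx
  have hball : ∀ w w', w ≠ w' → Disjoint (ball (x w) (dynEntourage f V (P * (n + 1))))
      (ball (x w') (dynEntourage f V (P * (n + 1)))) := by
    intro w w' hww'
    obtain ⟨k, hk⟩ := ne_iff.1 hww'
    have hkP : P * k < P * (n + 1) := Nat.mul_lt_mul_of_pos_left k.isLt (Nat.pos_of_ne_zero hP)
    exact disjoint_left.2 fun z hz hz' ↦ disjoint_left.1 (hVdisj hk)
      (mem_iUnion₂_of_mem (hx w k) (mem_ball_dynEntourage.1 hz _ hkP))
      (mem_iUnion₂_of_mem (hx w' k) (mem_ball_dynEntourage.1 hz' _ hkP))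
  have hself : ∀ w, x w ∈ ball (x w) (dynEntourage f V (P * (n + 1))) := fun w ↦
    mem_ball_dynEntourage.2 fun _ _ ↦ mem_ball_self _ hV
  have hinj : Injective x := fun w w' hxw ↦ by_contra fun hww' ↦
    disjoint_left.1 (hball w w' hww') (hself w) (hxw ▸ hself w')
  have hnet : IsDynNetIn f F V (P * (n + 1)) ↑(Finset.univ.image x) := by
    rw [Finset.coe_image, Finset.coe_univ, image_univ]
    refine ⟨?_, ?_⟩
    · rintro _ ⟨w, rfl⟩
      simpa using hKF _ (hx w 0)
    · rintro _ ⟨w, rfl⟩ _ ⟨w', rfl⟩ hxw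
      exact hball w w' fun h ↦ hxw (h ▸ rfl)
  simpa [Finset.card_image_of_injective _ hinj] using hnet.card_le_netMaxcard

theorem log_card_le_mul_coverEntropy [T2Space X] (hP : P ≠ 0) (hK : ∀ i, IsCompact (K i))
    (hne : ∀ i, (K i).Nonempty) (hKF : ∀ i, K i ⊆ F) (hdisj : Pairwise (Disjoint on K))
    (hcov : ∀ i j, K j ⊆ f^[P] '' K i) :
    ENNReal.log (Fintype.card ι) ≤ P * coverEntropy f F := by
  obtain ⟨V, hV, hVdisj⟩ := exists_mem_uniformity_pairwise_disjoint_thickening hK hdisj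
  calc ENNReal.log (Fintype.card ι)
      = expGrowthSup fun n ↦ (Fintype.card ι : ENNReal) ^ n := expGrowthSup_pow.symm
    _ ≤ expGrowthSup fun n ↦ (netMaxcard f F V (P * n) : ENNReal) := by
      refine expGrowthSup_eventually_monotone (eventually_atTop.2 ⟨1, fun n hn ↦ ?_⟩)
      obtain ⟨m, rfl⟩ := Nat.exists_eq_add_of_le' hn
      simpa using ENat.toENNReal_mono (card_pow_le_netMaxcard hP hV hVdisj hne hKF hcov m)
    _ = P * netEntropyEntourage f F V :=
      (ENat.toENNReal_mono.comp (netMaxcard_monotone_time f F V)).expGrowthSup_comp_mul hP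
    _ ≤ P * coverEntropy f F :=
      mul_le_mul_of_nonneg_left (netEntropyEntourage_le_coverEntropy f F hV) (by positivity)

end Dynamics

theorem EReal.coe_le_of_forall_mul_le_add {a c : ℝ} {h : EReal}
    (H : ∀ n : ℕ, ((n + 1 : ℕ) : EReal) * a ≤ c + (n + 1 : ℕ) * h) : (a : EReal) ≤ h := by
  induction h using EReal.rec with
  | bot => simpa using H 0
  | top => exact le_top
  | coe r =>
    have H' : ∀ n : ℕ, (n + 1 : ℝ) * a ≤ c + (n + 1) * r := fun n ↦ by
      exact_mod_cast H n
    rw [EReal.coe_le_coe_iff]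
    by_contra! hra
    obtain ⟨n, hn⟩ := exists_nat_gt (c / (a - r))
    have := H' n
    rw [div_lt_iff₀ (_root_.sub_pos.2 hra)] at hn
    nlinarith

theorem ENNReal.log_natCast {n : ℕ} (hn : n ≠ 0) : ENNReal.log n = Real.log n := by
  rw [← ENNReal.ofReal_natCast, ENNReal.log_ofReal_of_pos (by positivity)]

theorem IsHorseshoe.succ_mul_log_card_le {ι : Type*} [Fintype ι] {g : ℝ → ℝ} {a b : ι → ℝ}
    {F : Set ℝ} (hg : Continuous g) (h : IsHorseshoe g a b) (hF : ∀ i, Icc (a i) (b i) ⊆ F)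
    (n : ℕ) :
    ((n + 1 : ℕ) : EReal) * ENNReal.log (Fintype.card ι) ≤
      ENNReal.log 2 + (n + 1 : ℕ) * coverEntropy g F := by
  classical
  obtain ⟨a', b', hiter, hsub⟩ := h.iterate hg n
  obtain ⟨S, -, hcard, hS⟩ := Finset.univ.exists_subset_pairwise_disjoint_Icc
    (fun w _ ↦ hiter.lt w) (fun w _ w' _ hww' ↦ hiter.pairwise_disjoint_Ioo hww')
  have hS' := log_card_le_mul_coverEntropy (K := fun w : S ↦ Icc (a' w) (b' w)) n.succ_ne_zero
    (fun _ ↦ isCompact_Icc) (fun w ↦ nonempty_Icc.2 (hiter.lt w).le) (fun w ↦ (hsub w).trans (hF _))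
    (fun w w' hww' ↦ hS w.2 w'.2 (Subtype.coe_ne_coe.2 hww')) fun w w' ↦ hiter.Icc_subset_image w w'
  rw [Finset.card_univ, Fintype.card_fun, Fintype.card_fin] at hcard
  rw [Fintype.card_coe] at hS'
  calc ((n + 1 : ℕ) : EReal) * ENNReal.log (Fintype.card ι)
      = ENNReal.log ((Fintype.card ι ^ (n + 1) : ℕ) : ENNReal) := by
        rw [Nat.cast_pow, ENNReal.log_pow]
    _ ≤ ENNReal.log (2 * S.card) := ENNReal.log_le_log (by exact_mod_cast hcard)
    _ ≤ ENNReal.log 2 + (n + 1 : ℕ) * coverEntropy g F := by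
        rw [ENNReal.log_mul_add]
        gcongr

theorem horseshoe_entropy_lower_bound (f : ℝ →ᵇ ℝ) (d : ℕ) (hd : 1 ≤ d)
    (hf : HasHorseshoe f d) :
    (Real.log d : EReal) ≤ htop f := by
  obtain ⟨I, hlt, hdisj, hcov⟩ := hf
  have hI : IsHorseshoe f (fun i ↦ (I i).1) (fun i ↦ (I i).2) :=
    ⟨hlt, fun i j hij ↦ by simpa only [interior_Icc] using hdisj i j hij, hcov⟩
  have hF : ∀ i, Icc (I i).1 (I i).2 ⊆ closure (range f) := fun i ↦
    (hcov i i).trans ((image_subset_range _ _).trans subset_closure)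
  refine EReal.coe_le_of_forall_mul_le_add (c := Real.log 2) fun n ↦ ?_
  have := hI.succ_mul_log_card_le f.continuous hF n
  have hlog2 : ENNReal.log 2 = Real.log 2 := by exact_mod_cast ENNReal.log_natCast two_ne_zero
  rwa [Fintype.card_fin, ENNReal.log_natCast (by omega), hlog2] at this
end

section
/- If B is a linear subspace of the space of bounded continuous functions ℝ → ℝ with dim(B) = n (n ≥ 2), then h_top^+(B) ≥ log(n−1), i.e. there exists f ∈ B with topological entropy h_top(f) ≥ log(n−1). -/
open BoundedContinuousFunction

/-!
An `n`-dimensional space of functions admits `n` interpolation nodes `t₀ < ⋯ < tₙ₋₁`, so `B`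
contains an `f` with `f tᵢ = (-1)ⁱ C`, where `C` exceeds `|t₀| + |tₙ₋₁|`. By the intermediate
value theorem each gap `(tᵢ, tᵢ₊₁)` then contains a compact interval whose image covers
`[t₀, tₙ₋₁]`: these `n - 1` disjoint intervals form a horseshoe. Following all `(n - 1)ᴺ`
itineraries of length `N` through it gives orbit segments that are pairwise separated by a fixed
entourage, hence `h_top f ≥ log (n - 1)`.
-/

open Set Filter Dynamics Function Module Uniformity UniformSpace ExpGrowth
open scoped ENNReal

section Interpolation

variable {K V X : Type*} [Field K] [AddCommGroup V] [Module K V] [FiniteDimensional K V]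

theorem exists_finset_surjective_funLeft_comp {φ : V →ₗ[K] X → K} (hφ : Injective φ) {k : ℕ}
    (hk : k ≤ finrank K V) :
    ∃ s : Finset X, s.card = k ∧ Surjective (LinearMap.funLeft K K ((↑) : s → X) ∘ₗ φ) := by
  induction k with
  | zero => exact ⟨∅, rfl, fun v => ⟨0, funext fun x => (Finset.notMem_empty _ x.2).elim⟩⟩
  | succ k ih =>
    obtain ⟨s, hs, hsurj⟩ := ih (by omega)
    have hker : LinearMap.ker (LinearMap.funLeft K K ((↑) : s → X) ∘ₗ φ) ≠ ⊥ :=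
      LinearMap.ker_ne_bot_of_finrank_lt (by simp [hs]; omega)
    obtain ⟨g, hg, hg0⟩ := Submodule.exists_mem_ne_zero_of_ne_bot hker
    have hgs : ∀ x ∈ s, φ g x = 0 := fun x hx => congrFun (LinearMap.mem_ker.mp hg) ⟨x, hx⟩
    obtain ⟨p, hp⟩ : ∃ p, φ g p ≠ 0 := by
      by_contra! h
      exact hg0 (hφ (funext h ▸ (map_zero φ).symm))
    have hps : p ∉ s := fun h => hp (hgs p h)
    refine ⟨s.cons p hps, by rw [Finset.card_cons, hs], fun v => ?_⟩
    obtain ⟨h, hh⟩ := hsurj fun x => v ⟨x, Finset.mem_cons_of_mem x.2⟩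
    -- correct `h` at the new point `p` by a multiple of `g`, which vanishes on `s`
    refine ⟨h + ((v ⟨p, Finset.mem_cons_self p s⟩ - φ h p) / φ g p) • g, funext fun x => ?_⟩
    obtain ⟨x, hx⟩ := x
    rcases Finset.mem_cons.mp hx with rfl | hx
    · simp [field]
    · simpa [hgs x hx] using congrFun hh ⟨x, hx⟩

theorem exists_strictMono_interpolating [LinearOrder X] {φ : V →ₗ[K] X → K} (hφ : Injective φ)
    {n : ℕ} (hn : n ≤ finrank K V) :
    ∃ t : Fin n → X, StrictMono t ∧ ∀ c : Fin n → K, ∃ v, ∀ i, φ v (t i) = c i := by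
  obtain ⟨s, hs, hsurj⟩ := exists_finset_surjective_funLeft_comp hφ hn
  refine ⟨fun i => s.orderIsoOfFin hs i, fun i j hij => by simpa using hij, fun c => ?_⟩
  obtain ⟨v, hv⟩ := hsurj fun x => c ((s.orderIsoOfFin hs).symm x)
  exact ⟨v, fun i => by simpa using congrFun hv (s.orderIsoOfFin hs i)⟩

end Interpolation

section Horseshoe

variable {X ι : Type*}

/-- The pieces are disjoint compact sets, not merely intervals with disjoint interiors as in
`HasHorseshoe`: this is what makes them uniformly separated. -/
structure IsStrictHorseshoe [TopologicalSpace X] (f : X → X) (K : ι → Set X) : Prop where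
  isCompact : ∀ i, IsCompact (K i)
  nonempty : ∀ i, (K i).Nonempty
  pairwise_disjoint : Pairwise (Disjoint on K)
  subset_image : ∀ i j, K j ⊆ f '' K i

namespace IsStrictHorseshoe

variable {f : X → X} {K : ι → Set X}

theorem exists_iterate_mem [TopologicalSpace X] (h : IsStrictHorseshoe f K) (m : ℕ) (w : ℕ → ι) :
    ∃ x, ∀ k ≤ m, f^[k] x ∈ K (w k) := by
  induction m generalizing w with
  | zero =>
    obtain ⟨x, hx⟩ := h.nonempty (w 0)
    exact ⟨x, fun k hk => by rwa [Nat.le_zero.mp hk]⟩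
  | succ m ih =>
    obtain ⟨y, hy⟩ := ih (w ∘ Nat.succ)
    obtain ⟨x, hx, rfl⟩ := h.subset_image (w 0) (w 1) (hy 0 m.zero_le)
    refine ⟨x, fun k hk => ?_⟩
    cases k with
    | zero => exact hx
    | succ k => exact hy k (by omega)

variable [UniformSpace X]

theorem exists_uniform_separation [T2Space X] [Finite ι] (h : IsStrictHorseshoe f K) :
    ∃ V ∈ 𝓤 X, Pairwise (Disjoint on fun i => ⋃ x ∈ K i, ball x V) := by
  have : ∀ i j, ∃ V ∈ 𝓤 X, i ≠ j → Disjoint (⋃ x ∈ K i, ball x V) (⋃ x ∈ K j, ball x V) := by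
    intro i j
    by_cases hij : i = j
    · exact ⟨univ, univ_mem, fun h => (h hij).elim⟩
    · obtain ⟨V, hV, hdisj⟩ := (h.pairwise_disjoint hij).exists_uniform_thickening
        (h.isCompact i) (h.isCompact j).isClosed
      exact ⟨V, hV, fun _ => hdisj⟩
  choose V hV hdisj using this
  refine ⟨⋂ i, ⋂ j, V i j, iInter_mem.2 fun i => iInter_mem.2 (hV i), fun i j hij => ?_⟩
  have hball : ∀ x, ball x (⋂ i, ⋂ j, V i j) ⊆ ball x (V i j) :=
    fun x => ball_mono (iInter_subset_of_subset i (iInter_subset _ j)) x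
  exact (hdisj i j hij).mono (iUnion₂_mono fun x _ => hball x) (iUnion₂_mono fun x _ => hball x)

theorem card_pow_le_netMaxcard [Fintype ι] [Nonempty ι] (h : IsStrictHorseshoe f K) {F : Set X}
    (hF : ∀ i, K i ⊆ F) {V : SetRel X X} (hV : V ∈ 𝓤 X)
    (hsep : Pairwise (Disjoint on fun i => ⋃ x ∈ K i, ball x V)) (N : ℕ) :
    (Fintype.card ι : ℕ∞) ^ N ≤ netMaxcard f F V N := by
  classical
  have hitin : ∀ w : Fin N → ι, ∃ x ∈ F, ∀ k : Fin N, f^[k] x ∈ K (w k) := by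
    intro w
    obtain ⟨x, hx⟩ := h.exists_iterate_mem N
      fun k => if hk : k < N then w ⟨k, hk⟩ else Classical.arbitrary ι
    exact ⟨x, hF _ (hx 0 N.zero_le), fun k => by simpa [k.2] using hx k k.2.le⟩
  choose x hxF hxK using hitin
  have hball : ∀ w w', w ≠ w' →
      Disjoint (ball (x w) (dynEntourage f V N)) (ball (x w') (dynEntourage f V N)) := by
    intro w w' hww
    obtain ⟨k, hk⟩ := ne_iff.mp hww
    exact disjoint_left.mpr fun z hz hz' => disjoint_left.mp (hsep hk)
      (mem_iUnion₂_of_mem (hxK w k) (mem_ball_dynEntourage.mp hz k k.2))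
      (mem_iUnion₂_of_mem (hxK w' k) (mem_ball_dynEntourage.mp hz' k k.2))
  have hinj : Injective x := by
    intro w w' hxw
    by_contra hww
    have hself : ∀ w, x w ∈ ball (x w) (dynEntourage f V N) :=
      fun w => mem_ball_dynEntourage.mpr fun k _ => refl_mem_uniformity hV
    exact disjoint_left.mp (hball w w' hww) (hself w) (hxw ▸ hself w')
  have hnet : IsDynNetIn f F V N (Finset.univ.image x : Finset X) := by
    refine ⟨by simpa [range_subset_iff] using hxF, ?_⟩
    simp only [Finset.coe_image, Finset.coe_univ, image_univ]
    rintro _ ⟨w, rfl⟩ _ ⟨w', rfl⟩ hne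
    exact hball w w' fun hww => hne (hww ▸ rfl)
  calc (Fintype.card ι : ℕ∞) ^ N = (Finset.univ.image x).card := by
        rw [Finset.card_image_of_injective _ hinj]; simp
    _ ≤ netMaxcard f F V N := hnet.card_le_netMaxcard

theorem log_card_le_coverEntropy [T2Space X] [Fintype ι] [Nonempty ι]
    (h : IsStrictHorseshoe f K) {F : Set X} (hF : ∀ i, K i ⊆ F) :
    (Real.log (Fintype.card ι) : EReal) ≤ coverEntropy f F := by
  obtain ⟨V, hV, hsep⟩ := h.exists_uniform_separation
  calc (Real.log (Fintype.card ι) : EReal)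
      = expGrowthSup fun N => (Fintype.card ι : ℝ≥0∞) ^ N := by
        rw [expGrowthSup_pow, ← ENNReal.ofReal_natCast, ENNReal.log_ofReal_of_pos (by positivity)]
    _ ≤ netEntropyEntourage f F V := ExpGrowth.expGrowthSup_monotone fun N => by
        simpa [ENat.toENNReal_pow] using
          ENat.toENNReal_le.mpr (h.card_pow_le_netMaxcard hF hV hsep N)
    _ ≤ coverEntropy f F := netEntropyEntourage_le_coverEntropy f F hV

end IsStrictHorseshoe

end Horseshoe

theorem IsStrictHorseshoe.log_card_le_htop {ι : Type*} [Fintype ι] [Nonempty ι] {f : ℝ → ℝ}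
    {K : ι → Set ℝ} (h : IsStrictHorseshoe f K) : (Real.log (Fintype.card ι) : EReal) ≤ htop f :=
  h.log_card_le_coverEntropy fun i =>
    (h.subset_image (Classical.arbitrary ι) i).trans ((image_subset_range _ _).trans subset_closure)

section Intervals

theorem Monotone.pairwise_disjoint_on_Ioo_castSucc_succ {α : Type*} [Preorder α] {d : ℕ}
    {t : Fin (d + 1) → α} (ht : Monotone t) :
    Pairwise (Disjoint on fun i : Fin d => Ioo (t i.castSucc) (t i.succ)) :=
  (pairwise_disjoint_on _).2 fun _ _ hij => disjoint_left.2 fun _ hi hj =>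
    lt_asymm hi.2 ((ht (Fin.succ_le_castSucc_iff.2 hij)).trans_lt hj.1)

variable {α : Type*} [ConditionallyCompleteLinearOrder α] [DenselyOrdered α] [TopologicalSpace α]
  [OrderTopology α]

theorem exists_uIcc_subset_Ioo_Icc_subset_image {f : α → ℝ} (hf : Continuous f) {p q : α}
    (hpq : p ≤ q) (hq : f q = -f p) {c : ℝ} (hc : |c| < |f p|) :
    ∃ a b, uIcc a b ⊆ Ioo p q ∧ Icc (-c) c ⊆ f '' uIcc a b := by
  have hivt : ∀ y, |y| < |f p| → y ∈ f '' Ioo p q := by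
    intro y hy
    obtain ⟨hy₁, hy₂⟩ := abs_lt.mp hy
    rcases abs_cases (f p) with ⟨hp, -⟩ | ⟨hp, -⟩
    · exact intermediate_value_Ioo' hpq hf.continuousOn ⟨by linarith, by linarith⟩
    · exact intermediate_value_Ioo hpq hf.continuousOn ⟨by linarith, by linarith⟩
  obtain ⟨a, ha, hfa⟩ := hivt (-c) (by rwa [abs_neg])
  obtain ⟨b, hb, hfb⟩ := hivt c hc
  exact ⟨a, b, ordConnected_Ioo.uIcc_subset ha hb, (isPreconnected_uIcc.image f
    hf.continuousOn).Icc_subset ⟨a, left_mem_uIcc, hfa⟩ ⟨b, right_mem_uIcc, hfb⟩⟩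

theorem exists_isStrictHorseshoe_of_alternating {f : ℝ → ℝ} (hf : Continuous f) {d : ℕ}
    {t : Fin (d + 1) → ℝ} (ht : StrictMono t) {C : ℝ} (hft : ∀ i, f (t i) = (-1) ^ (i : ℕ) * C)
    (hC : |t 0| + |t (Fin.last d)| < C) :
    ∃ K : Fin d → Set ℝ, IsStrictHorseshoe f K := by
  set c := |t 0| + |t (Fin.last d)|
  have hspan : ∀ i : Fin d, Ioo (t i.castSucc) (t i.succ) ⊆ Icc (-c) c := fun i =>
    have h₀ := ht.monotone (Fin.zero_le i.castSucc)
    have h₁ := ht.monotone (Fin.le_last i.succ)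
    Ioo_subset_Icc_self.trans <| Icc_subset_Icc
      (by linarith [neg_abs_le (t 0), abs_nonneg (t (Fin.last d))])
      (by linarith [le_abs_self (t (Fin.last d)), abs_nonneg (t 0)])
  have hpiece : ∀ i : Fin d, ∃ a b,
      uIcc a b ⊆ Ioo (t i.castSucc) (t i.succ) ∧ Icc (-c) c ⊆ f '' uIcc a b := by
    intro i
    refine exists_uIcc_subset_Ioo_Icc_subset_image hf (ht Fin.castSucc_lt_succ).le ?_ ?_
    · simp [hft, pow_succ]
    · rw [hft, abs_mul, abs_pow, abs_neg, abs_one, one_pow, one_mul, abs_of_nonneg (by positivity)]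
      exact hC.trans_le (le_abs_self C)
  choose a b hsub himage using hpiece
  exact ⟨fun i => uIcc (a i) (b i), ⟨fun _ => isCompact_uIcc, fun _ => nonempty_uIcc,
    ht.monotone.pairwise_disjoint_on_Ioo_castSucc_succ.mono fun i j hij =>
      hij.mono (hsub i) (hsub j),
    fun i j => (hsub j).trans ((hspan j).trans (himage i))⟩⟩

end Intervals

theorem finite_dim_entropy_sup_lower_bound (n : ℕ) (hn : 2 ≤ n)
    (B : Submodule ℝ (ℝ →ᵇ ℝ)) (hB : Module.finrank ℝ B = n) :
    ∃ f ∈ B, (Real.log ((n : ℝ) - 1) : EReal) ≤ htop f := by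
  have : FiniteDimensional ℝ B := .of_finrank_pos (by omega)
  obtain ⟨d, rfl⟩ : ∃ d, n = d + 1 := ⟨n - 1, by omega⟩
  have : Nonempty (Fin d) := ⟨⟨0, by omega⟩⟩
  let φ : B →ₗ[ℝ] ℝ → ℝ :=
    ContinuousMap.coeFnLinearMap ℝ ∘ₗ toContinuousMapLinearMap ℝ ℝ ℝ ∘ₗ B.subtype
  have hφ : Injective φ := fun g h hgh => Subtype.ext (BoundedContinuousFunction.ext (congrFun hgh))
  obtain ⟨t, ht, hinterp⟩ := exists_strictMono_interpolating (K := ℝ) (V := B) hφ hB.ge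
  obtain ⟨g, hg⟩ := hinterp fun i => (-1) ^ (i : ℕ) * (|t 0| + |t (Fin.last d)| + 1)
  obtain ⟨K, hK⟩ :=
    exists_isStrictHorseshoe_of_alternating (g : ℝ →ᵇ ℝ).continuous ht hg (lt_add_one _)
  refine ⟨g, g.2, ?_⟩
  simpa using hK.log_card_le_htop
end

section
/- If B is an infinite-dimensional linear subspace of the space of bounded continuous functions ℝ → ℝ, then h_top^+(B) = ∞, i.e. for every real number M there exists f ∈ B with topological entropy h_top(f) > M. -/
/-!
A linear space of functions that is not finite-dimensional interpolates arbitrary values on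
suitable finite sets of any size. Prescribing alternately low and high values at `2d` increasing
points `x₀ < ⋯ < x_{2d-1}` gives `f ∈ B` mapping each of the `d` disjoint intervals
`[x_{2i}, x_{2i+1}]` onto a set covering all of them (intermediate value theorem). Each itinerary
through these intervals is then followed by some orbit, and orbits with different itineraries of
length `n` are uniformly separated: `dⁿ` separated orbit segments give `h_top f ≥ log d`.
-/

open BoundedContinuousFunction

open Set Filter Uniformity
open scoped SetRel

namespace Submodule

variable {K X : Type*} [Field K] {V : Submodule K (X → K)} {s : Set X}

def InterpolatesOn (V : Submodule K (X → K)) (s : Set X) : Prop :=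
  ∀ v : X → K, ∃ f ∈ V, EqOn f v s

lemma interpolatesOn_empty : V.InterpolatesOn ∅ :=
  fun _ ↦ ⟨0, V.zero_mem, eqOn_empty _ _⟩

lemma InterpolatesOn.insert (hs : V.InterpolatesOn s) {g : X → K} (hgV : g ∈ V)
    (hgs : EqOn g 0 s) {y : X} (hgy : g y ≠ 0) : V.InterpolatesOn (insert y s) := by
  intro v
  obtain ⟨f, hfV, hfs⟩ := hs v
  refine ⟨f + ((v y - f y) / g y) • g, V.add_mem hfV (V.smul_mem _ hgV), ?_⟩
  rintro x (rfl | hx)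
  · simp only [Pi.add_apply, Pi.smul_apply, smul_eq_mul]
    field_simp
    ring
  · simp [hfs hx, hgs hx]

lemma exists_eqOn_zero_ne_zero (hV : ¬ Module.Finite K V) (s : Finset X) :
    ∃ g ∈ V, EqOn g 0 s ∧ ∃ y, g y ≠ 0 := by
  by_contra! h
  let restrict : V →ₗ[K] (s → K) := LinearMap.pi fun x ↦ (LinearMap.proj (x : X)).comp V.subtype
  refine hV (Module.Finite.of_injective restrict fun f g hfg ↦ ?_)
  rw [← sub_eq_zero]
  ext y
  refine h _ (V.sub_mem f.2 g.2) (fun x hx ↦ ?_) y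
  simpa [restrict, sub_eq_zero] using congrFun hfg ⟨x, hx⟩

lemma exists_interpolatesOn_card_eq (hV : ¬ Module.Finite K V) (n : ℕ) :
    ∃ s : Finset X, s.card = n ∧ V.InterpolatesOn s := by
  classical
  induction n with
  | zero => exact ⟨∅, rfl, by simpa using interpolatesOn_empty⟩
  | succ n ih =>
    obtain ⟨s, rfl, hs⟩ := ih
    obtain ⟨g, hgV, hgs, y, hgy⟩ := exists_eqOn_zero_ne_zero hV s
    have hys : y ∉ s := fun hy ↦ hgy (hgs hy)
    exact ⟨insert y s, Finset.card_insert_of_notMem hys, by simpa using hs.insert hgV hgs hgy⟩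

end Submodule

theorem exists_iterate_mem_of_subset_image {α ι : Type*} {f : α → α} {J : ι → Set α}
    (hJ : ∀ i, (J i).Nonempty) (hcov : ∀ i j, J j ⊆ f '' J i) (w : ℕ → ι) (n : ℕ) :
    ∃ t, ∀ k ≤ n, f^[k] t ∈ J (w k) := by
  induction n generalizing w with
  | zero =>
    obtain ⟨t, ht⟩ := hJ (w 0)
    exact ⟨t, fun k hk ↦ by rwa [Nat.le_zero.1 hk]⟩
  | succ n ih =>
    obtain ⟨t', ht'⟩ := ih fun k ↦ w (k + 1)
    obtain ⟨t, ht, rfl⟩ := hcov (w 0) (w 1) (ht' 0 n.zero_le)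
    refine ⟨t, fun k hk ↦ ?_⟩
    cases k with
    | zero => exact ht
    | succ k => simpa only [Function.iterate_succ_apply] using ht' k (by omega)

theorem exists_mem_uniformity_pairwise_notMem {X ι : Type*} [UniformSpace X] [T2Space X]
    [Finite ι] {J : ι → Set X} (hJ : ∀ i, IsCompact (J i))
    (hdisj : Pairwise fun i j ↦ Disjoint (J i) (J j)) :
    ∃ U ∈ 𝓤 X, Pairwise fun i j ↦ ∀ x ∈ J i, ∀ y ∈ J j, (x, y) ∉ U := by
  have : ∀ i j, ∃ U ∈ 𝓤 X, i ≠ j → ∀ x ∈ J i, ∀ y ∈ J j, (x, y) ∉ U := by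
    intro i j
    by_cases hij : i = j
    · exact ⟨univ, univ_mem, fun h ↦ (h hij).elim⟩
    obtain ⟨U, hU, hdisjU⟩ := (hdisj hij).exists_uniform_thickening (hJ i) (hJ j).isClosed
    exact ⟨U, hU, fun _ x hx y hy hxy ↦ disjoint_left.1 hdisjU
      (mem_iUnion₂_of_mem hx hxy) (mem_iUnion₂_of_mem hy (refl_mem_uniformity hU))⟩
  choose U hU hsep using this
  exact ⟨⋂ i, ⋂ j, U i j, iInter_mem.2 fun i ↦ iInter_mem.2 (hU i),
    fun i j hij x hx y hy hxy ↦ hsep i j hij x hx y hy (mem_iInter.1 (mem_iInter.1 hxy i) j)⟩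

namespace Dynamics

variable {X : Type*} {T : X → X} {F : Set X} {U : SetRel X X}

lemma isDynNetIn_of_pairwise_notMem [U.IsSymm] {n : ℕ} {s : Set X} (hsF : s ⊆ F)
    (hs : s.Pairwise fun x y ↦ (x, y) ∉ dynEntourage T (U ○ U) n) : IsDynNetIn T F U n s := by
  refine ⟨hsF, fun x hx y hy hxy ↦ disjoint_iff_inter_eq_empty.2 ?_⟩
  by_contra h
  exact hs hy hx hxy.symm (mem_ball_dynEntourage_comp T n x y (nonempty_iff_ne_empty.2 h))

variable [UniformSpace X] {ι : Type*} [Fintype ι] {J : ι → Set X}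

lemma pow_card_le_netMaxcard (hU : U ∈ 𝓤 X)
    (hsep : Pairwise fun i j ↦ ∀ x ∈ J i, ∀ y ∈ J j, (x, y) ∉ U)
    (hJF : ∀ i, J i ⊆ F) (hJ : ∀ i, (J i).Nonempty) (hcov : ∀ i j, J j ⊆ T '' J i) [Nonempty ι]
    {V : SetRel X X} [V.IsSymm] (hVU : V ○ V ⊆ U) (n : ℕ) :
    ((Fintype.card ι ^ n : ℕ) : ℕ∞) ≤ netMaxcard T F V n := by
  classical
  obtain ⟨i₀⟩ := ‹Nonempty ι›
  have : ∀ w : Fin n → ι, ∃ t, ∀ k ≤ n, T^[k] t ∈ J (if h : k < n then w ⟨k, h⟩ else i₀) :=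
    fun w ↦ exists_iterate_mem_of_subset_image hJ hcov _ n
  choose t ht using this
  have hfar : ∀ w w', w ≠ w' → ∃ k < n, (T^[k] (t w), T^[k] (t w')) ∉ U := by
    intro w w' hww'
    obtain ⟨k, hk⟩ := Function.ne_iff.1 hww'
    refine ⟨k, k.2, hsep hk _ ?_ _ ?_⟩
    · simpa using ht w k k.2.le
    · simpa using ht w' k k.2.le
  have ht_inj : Function.Injective t := by
    intro w w' h
    by_contra hww'
    obtain ⟨k, -, hk⟩ := hfar w w' hww'
    exact hk (h ▸ refl_mem_uniformity hU)
  have hnet : IsDynNetIn T F V n (Finset.univ.image t : Set X) := by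
    rw [Finset.coe_image, Finset.coe_univ, image_univ]
    refine isDynNetIn_of_pairwise_notMem ?_ ?_
    · rintro _ ⟨w, rfl⟩
      exact hJF _ (by simpa using ht w 0 n.zero_le)
    · rintro _ ⟨w, rfl⟩ _ ⟨w', rfl⟩ hne
      obtain ⟨k, hk, hkU⟩ := hfar w w' (fun h ↦ hne (congrArg t h))
      exact fun h ↦ hkU (hVU (mem_dynEntourage.1 h k hk))
  simpa [Finset.card_image_of_injective _ ht_inj] using hnet.card_le_netMaxcard

theorem log_card_le_coverEntropy (hU : U ∈ 𝓤 X)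
    (hsep : Pairwise fun i j ↦ ∀ x ∈ J i, ∀ y ∈ J j, (x, y) ∉ U)
    (hJF : ∀ i, J i ⊆ F) (hJ : ∀ i, (J i).Nonempty) (hcov : ∀ i j, J j ⊆ T '' J i) :
    ENNReal.log (Fintype.card ι) ≤ coverEntropy T F := by
  rcases isEmpty_or_nonempty ι with hι | hι
  · simp
  obtain ⟨V, hV, hVsymm, hVU⟩ := comp_symm_mem_uniformity_sets hU
  calc ENNReal.log (Fintype.card ι)
      = ExpGrowth.expGrowthSup fun n ↦ (Fintype.card ι : ENNReal) ^ n :=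
        ExpGrowth.expGrowthSup_pow.symm
    _ ≤ netEntropyEntourage T F V := ExpGrowth.expGrowthSup_monotone fun n ↦ by
        simpa using ENat.toENNReal_mono (pow_card_le_netMaxcard hU hsep hJF hJ hcov hVU n)
    _ ≤ coverEntropy T F := netEntropyEntourage_le_coverEntropy T F hV

end Dynamics

namespace BoundedContinuousFunction

theorem exists_finset_card_eq_forall_exists_eqOn {X : Type*} [TopologicalSpace X]
    {B : Submodule ℝ (X →ᵇ ℝ)} (hB : ¬ Module.Finite ℝ B) (n : ℕ) :
    ∃ s : Finset X, s.card = n ∧ ∀ v : X → ℝ, ∃ f ∈ B, EqOn f v s := by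
  let φ : (X →ᵇ ℝ) →ₗ[ℝ] X → ℝ :=
    ContinuousMap.coeFnLinearMap ℝ ∘ₗ toContinuousMapLinearMap X ℝ ℝ
  have hφ : Function.Injective φ := fun f g h ↦ ext (congrFun h)
  have hW : ¬ Module.Finite ℝ (B.map φ) := fun h ↦
    hB (Module.Finite.equiv (Submodule.equivMapOfInjective φ hφ B).symm)
  obtain ⟨s, hs, hinterp⟩ := Submodule.exists_interpolatesOn_card_eq hW n
  refine ⟨s, hs, fun v ↦ ?_⟩
  obtain ⟨_, ⟨f, hfB, rfl⟩, hf⟩ := hinterp v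
  exact ⟨f, hfB, hf⟩

end BoundedContinuousFunction

/-- Unlike `HasHorseshoe`, the intervals `[p i, q i]` are pairwise disjoint, so orbits following
different itineraries stay a definite distance apart. -/
structure IsStrictHorseshoe_s3 (f : ℝ → ℝ) {d : ℕ} (p q : Fin d → ℝ) : Prop where
  le : ∀ i, p i ≤ q i
  right_lt_left : ∀ i j, i < j → q i < p j
  subset_image : ∀ i j, Icc (p j) (q j) ⊆ f '' Icc (p i) (q i)

lemma IsStrictHorseshoe_s3.log_le_htop {f : ℝ → ℝ} {d : ℕ} {p q : Fin d → ℝ}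
    (h : IsStrictHorseshoe_s3 f p q) : ENNReal.log d ≤ htop f := by
  have hdisj : Pairwise fun i j ↦ Disjoint (Icc (p i) (q i)) (Icc (p j) (q j)) := by
    have hlt : ∀ i j, i < j → Disjoint (Icc (p i) (q i)) (Icc (p j) (q j)) := fun i j hij ↦
      disjoint_left.2 fun x hxi hxj ↦ (h.right_lt_left i j hij).not_ge (hxj.1.trans hxi.2)
    intro i j hij
    rcases hij.lt_or_gt with hij | hji
    exacts [hlt i j hij, (hlt j i hji).symm]
  obtain ⟨U, hU, hsep⟩ := exists_mem_uniformity_pairwise_notMem (fun _ ↦ isCompact_Icc) hdisj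
  have hJF : ∀ i, Icc (p i) (q i) ⊆ closure (range f) := fun i ↦
    ((h.subset_image i i).trans (image_subset_range _ _)).trans subset_closure
  simpa [htop] using Dynamics.log_card_le_coverEntropy hU hsep hJF
    (fun i ↦ nonempty_Icc.2 (h.le i)) h.subset_image

theorem exists_mem_isStrictHorseshoe {B : Submodule ℝ (ℝ →ᵇ ℝ)} (hB : ¬ Module.Finite ℝ B)
    (d : ℕ) : ∃ f ∈ B, ∃ p q : Fin d → ℝ, IsStrictHorseshoe_s3 f p q := by
  obtain ⟨s, hs, hinterp⟩ := exists_finset_card_eq_forall_exists_eqOn hB (2 * d)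
  obtain ⟨lo, hlo⟩ := s.bddBelow
  obtain ⟨hi, hhi⟩ := s.bddAbove
  let e := s.orderEmbOfFin hs
  let p : Fin d → ℝ := fun i ↦ e ⟨2 * i, by omega⟩
  let q : Fin d → ℝ := fun i ↦ e ⟨2 * i + 1, by omega⟩
  have hqp : ∀ i j, q i ≠ p j := fun i j h ↦ by
    have := congrArg Fin.val (e.injective h)
    simp only at this
    omega
  obtain ⟨f, hfB, hf⟩ := hinterp fun y ↦ if y ∈ range p then lo else hi
  have hmem : ∀ k, e k ∈ s := s.orderEmbOfFin_mem hs
  have hfp : ∀ i, f (p i) = lo := fun i ↦ (hf (hmem _)).trans (if_pos ⟨i, rfl⟩)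
  have hfq : ∀ i, f (q i) = hi := fun i ↦
    (hf (hmem _)).trans (if_neg fun ⟨j, hj⟩ ↦ hqp i j hj.symm)
  have hpq : ∀ i, p i ≤ q i := fun i ↦ e.le_iff_le.2 (Fin.mk_le_mk.2 (by omega))
  refine ⟨f, hfB, p, q, hpq, fun i j hij ↦ e.lt_iff_lt.2 (Fin.mk_lt_mk.2 ?_), fun i j ↦ ?_⟩
  · have : (i : ℕ) < j := hij
    omega
  calc Icc (p j) (q j) ⊆ Icc lo hi := Icc_subset_Icc (hlo (hmem _)) (hhi (hmem _))
    _ ⊆ f '' Icc (p i) (q i) := by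
        simpa only [hfp, hfq] using intermediate_value_Icc (hpq i) f.continuous.continuousOn

theorem infinite_dim_entropy_sup_infinite (B : Submodule ℝ (ℝ →ᵇ ℝ))
    (hB : ¬ Module.Finite ℝ B) :
    ∀ M : ℝ, ∃ f ∈ B, (M : EReal) < htop f := by
  intro M
  obtain ⟨d, hd⟩ := ENNReal.exists_nat_gt (ENNReal.ofReal_ne_top : EReal.exp M ≠ ⊤)
  obtain ⟨f, hfB, p, q, hf⟩ := exists_mem_isStrictHorseshoe hB d
  refine ⟨f, hfB, ?_⟩
  calc (M : EReal) = ENNReal.log (EReal.exp M) := (EReal.log_exp M).symm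
    _ < ENNReal.log d := ENNReal.log_lt_log hd
    _ ≤ htop f := hf.log_le_htop
end

section
/- Let Φ : ℓ¹ → C([0,1]) be an isometric linear embedding of ℓ¹ (the Banach space of real sequences summable in absolute value with the 1-norm) into C([0,1]) (continuous real-valued functions on [0,1] with the supremum norm), and let f_i = Φ(e_i) where e_i is the i-th standard unit vector of ℓ¹. Then for every sign sequence s = (s_i)_{i∈ℕ} ∈ {−1, +1}^ℕ there exists a point x ∈ [0,1] such that either f_i(x) = s_i for all i ∈ ℕ, or f_i(x) = −s_i for all i ∈ ℕ. -/
/-!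
For a finite set `t` of indices, `Φ (∑ i ∈ t, s i • eᵢ) = ∑ i ∈ t, s i • fᵢ` has sup norm `#t`,
while every `|fᵢ|` is bounded by `‖eᵢ‖ = 1`. At a point where this norm is attained, all the
numbers `s i * fᵢ x` must therefore equal one common sign. The closed sets of points where the
`fᵢ`, `i ∈ t`, agree with `s` or with `-s` are thus nonempty and decrease as `t` grows, so by
compactness some point lies in all of them. Taking `t = {i₀, i}` shows that at such a point the
sign chosen at `i₀` is the one used at every `i`.
-/

open Finset

theorem Finset.forall_eq_one_or_forall_eq_neg_one_of_abs_sum_eq_card {ι : Type*}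
    {t : Finset ι} {a : ι → ℝ} (ha : ∀ i ∈ t, |a i| ≤ 1) (hsum : |∑ i ∈ t, a i| = #t) :
    (∀ i ∈ t, a i = 1) ∨ (∀ i ∈ t, a i = -1) := by
  have eq_one : ∀ b : ι → ℝ, (∀ i ∈ t, b i ≤ 1) → ∑ i ∈ t, b i = #t → ∀ i ∈ t, b i = 1 :=
    fun b hb hb_sum => (sum_eq_sum_iff_of_le hb).1 (by simpa using hb_sum)
  rcases (abs_eq (Nat.cast_nonneg _)).1 hsum with h | h
  · exact .inl (eq_one a (fun i hi => (abs_le.1 (ha i hi)).2) h)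
  · refine .inr fun i hi => neg_eq_iff_eq_neg.1 ?_
    exact eq_one (fun i => -a i) (fun i hi => by linarith [(abs_le.1 (ha i hi)).1])
      (by simp [h]) i hi

theorem ContinuousMap.exists_norm_apply_eq_norm {X E : Type*} [TopologicalSpace X]
    [CompactSpace X] [Nonempty X] [NormedAddCommGroup E] (f : C(X, E)) :
    ∃ x, ‖f x‖ = ‖f‖ := by
  obtain ⟨x, -, hx⟩ :=
    isCompact_univ.exists_isMaxOn Set.univ_nonempty (map_continuous f).norm.continuousOn
  exact ⟨x, le_antisymm (f.norm_coe_le_norm x)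
    ((f.norm_le (norm_nonneg _)).2 fun y => hx (Set.mem_univ y))⟩

theorem lp.norm_sum_single_one {ι : Type*} [DecidableEq ι] {E : ι → Type*}
    [∀ i, NormedAddCommGroup (E i)] (f : ∀ i, E i) (t : Finset ι) :
    ‖∑ i ∈ t, lp.single 1 i (f i)‖ = ∑ i ∈ t, ‖f i‖ := by
  simpa using lp.norm_sum_single (p := 1) (by simp) f t

namespace ContinuousMap

variable {X ι : Type*} [TopologicalSpace X]

def signAgreementSet (f : ι → C(X, ℝ)) (s : ι → ℝ) (t : Finset ι) : Set X :=
  {x | (∀ i ∈ t, f i x = s i) ∨ (∀ i ∈ t, f i x = -s i)}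

theorem isClosed_signAgreementSet (f : ι → C(X, ℝ)) (s : ι → ℝ) (t : Finset ι) :
    IsClosed (signAgreementSet f s t) := by
  simp only [signAgreementSet, Set.ofPred_or, Set.ofPred_forall]
  exact (isClosed_biInter fun i _ => isClosed_eq (f i).continuous continuous_const).union
    (isClosed_biInter fun i _ => isClosed_eq (f i).continuous continuous_const)

theorem signAgreementSet_antitone (f : ι → C(X, ℝ)) (s : ι → ℝ) :
    Antitone (signAgreementSet f s) := fun _ _ hst _ hx =>
  hx.imp (fun h i hi => h i (hst hi)) (fun h i hi => h i (hst hi))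

theorem exists_forall_eq_or_forall_eq_neg_of_forall_mem_signAgreementSet
    {f : ι → C(X, ℝ)} {s : ι → ℝ} {x : X} (hx : ∀ t, x ∈ signAgreementSet f s t) :
    (∀ i, f i x = s i) ∨ (∀ i, f i x = -s i) := by
  classical
  by_cases h : ∀ i, f i x = s i
  · exact .inl h
  push Not at h
  obtain ⟨i₀, hi₀⟩ := h
  refine .inr fun i => ?_
  rcases hx {i₀, i} with h | h
  · exact absurd (h i₀ (by simp)) hi₀
  · exact h i (by simp)

variable [CompactSpace X] [Nonempty X] [DecidableEq ι]

theorem signAgreementSet_nonempty_of_isometry (Φ : lp (fun _ : ι => ℝ) 1 →ₗᵢ[ℝ] C(X, ℝ))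
    {s : ι → ℝ} (hs : ∀ i, |s i| = 1) (t : Finset ι) :
    (signAgreementSet (fun i => Φ (lp.single 1 i (1 : ℝ))) s t).Nonempty := by
  set f : ι → C(X, ℝ) := fun i => Φ (lp.single 1 i (1 : ℝ))
  set g := Φ (∑ i ∈ t, lp.single 1 i (s i))
  have hg_norm : ‖g‖ = #t := by
    rw [Φ.norm_map, lp.norm_sum_single_one]
    simp [hs]
  have hg_apply : ∀ x, g x = ∑ i ∈ t, s i * f i x := fun x => by
    have hsingle : ∀ i, lp.single 1 i (s i) = s i • lp.single (E := fun _ : ι => ℝ) 1 i 1 :=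
      fun i => by rw [← lp.single_smul, smul_eq_mul, mul_one]
    simp only [g, f, hsingle, map_sum, map_smul, ContinuousMap.sum_apply,
      ContinuousMap.smul_apply, smul_eq_mul]
  have hf_le : ∀ i x, |f i x| ≤ 1 := fun i x => by
    simpa [f] using (f i).norm_coe_le_norm x
  obtain ⟨x, hx⟩ := g.exists_norm_apply_eq_norm
  have hsolve : ∀ i c, s i * f i x = c → f i x = s i * c := fun i c h => by
    rw [← h, ← mul_assoc, ← abs_mul_abs_self, hs i, one_mul, one_mul]
  rcases forall_eq_one_or_forall_eq_neg_one_of_abs_sum_eq_card (a := fun i => s i * f i x)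
      (fun i _ => by rw [abs_mul, hs i, one_mul]; exact hf_le i x)
      (by rw [← hg_apply, ← Real.norm_eq_abs, hx, hg_norm]) with h | h
  · exact ⟨x, .inl fun i hi => by simpa using hsolve i _ (h i hi)⟩
  · exact ⟨x, .inr fun i hi => by simpa using hsolve i _ (h i hi)⟩

theorem exists_forall_eq_or_forall_eq_neg_of_isometry
    (Φ : lp (fun _ : ι => ℝ) 1 →ₗᵢ[ℝ] C(X, ℝ)) {s : ι → ℝ} (hs : ∀ i, |s i| = 1) :
    ∃ x : X, (∀ i, Φ (lp.single 1 i (1 : ℝ)) x = s i) ∨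
      (∀ i, Φ (lp.single 1 i (1 : ℝ)) x = -s i) := by
  obtain ⟨x, hx⟩ := IsCompact.nonempty_iInter_of_directed_nonempty_isCompact_isClosed _
    (signAgreementSet_antitone _ s).directed_ge (signAgreementSet_nonempty_of_isometry Φ hs)
    (fun t => (isClosed_signAgreementSet _ s t).isCompact) (isClosed_signAgreementSet _ s)
  exact ⟨x, exists_forall_eq_or_forall_eq_neg_of_forall_mem_signAgreementSet
    (Set.mem_iInter.1 hx)⟩

end ContinuousMap

theorem exists_point_sign_agreement_of_isometry
    (Φ : lp (fun _ : ℕ => ℝ) 1 →ₗᵢ[ℝ] C(↥(Set.Icc (0 : ℝ) 1), ℝ))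
    (s : ℕ → ℝ) (hs : ∀ i, s i = 1 ∨ s i = -1) :
    ∃ x : ↥(Set.Icc (0 : ℝ) 1),
      (∀ i : ℕ, Φ (lp.single 1 i (1 : ℝ)) x = s i) ∨
      (∀ i : ℕ, Φ (lp.single 1 i (1 : ℝ)) x = -(s i)) :=
  ContinuousMap.exists_forall_eq_or_forall_eq_neg_of_isometry Φ (s := s) fun i => by
    rcases hs i with h | h <;> simp [h]
end

section
/- For n ≥ 2 let A_n be the n×n real matrix with entries a_{ij} = (−1)^i for 1 ≤ j < i and a_{ij} = (−1)^{i+1} for i ≤ j ≤ n. Then for every β = (β_1, …, β_n) ∈ ℝⁿ the linear equation A_n α = β has a unique solution α, given by α_i = (β_i + β_{i+1}) / ((−1)^{i+1}·2) for i = 1, …, n−1 and α_n = (β_1 + (−1)^{n+1} β_n)/2. In particular max_i |α_i| ≤ max_i |β_i|. -/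
/-- The matrix `A_n` (indexed from `0`, corresponding to the paper's `1`-based indexing:
`a_{ij} = (-1)^i` for `j < i` and `a_{ij} = (-1)^{i+1}` for `i ≤ j`). -/
def paperMatrix (n : ℕ) : Matrix (Fin n) (Fin n) ℝ :=
  Matrix.of fun i j => if (j : ℕ) < (i : ℕ) then (-1 : ℝ) ^ ((i : ℕ) + 1) else (-1) ^ (i : ℕ)

/-!
Adding two consecutive rows of `A_n` cancels every entry except the diagonal one, so
`β_i + β_{i+1} = (-1)^i · 2 α_i`; adding the first row to `(-1)^{n+1}` times the last one
likewise leaves `2 α_n`. Hence `α` is an explicit function of `β`: `A_n` is injective, so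
invertible, and each `α_i` is half a sum of two entries of `±β`.
-/

theorem abs_add_div_le_of_abs_eq_two {x y c M : ℝ} (hc : |c| = 2) (hx : |x| ≤ M)
    (hy : |y| ≤ M) : |(x + y) / c| ≤ M := by
  rw [abs_div, hc, div_le_iff₀ two_pos]
  linarith [abs_add_le x y]

namespace paperMatrix

variable {n : ℕ}

theorem mulVec_add_mulVec_succ (α : Fin n → ℝ) (i : Fin n) (h : (i : ℕ) + 1 < n) :
    (paperMatrix n).mulVec α i + (paperMatrix n).mulVec α ⟨(i : ℕ) + 1, h⟩ =
      (-1) ^ (i : ℕ) * 2 * α i := by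
  simp only [Matrix.mulVec, dotProduct, paperMatrix, Matrix.of_apply]
  rw [← Finset.sum_add_distrib, Finset.sum_eq_single i]
  · rw [if_neg (lt_irrefl _), if_pos (Nat.lt_succ_self _)]
    ring
  · intro j _ hji
    rcases (Fin.val_ne_of_ne hji).lt_or_gt with hlt | hgt
    · rw [if_pos hlt, if_pos (by omega)]
      ring
    · rw [if_neg (by omega), if_neg (by omega)]
      ring
  · exact fun hi => absurd (Finset.mem_univ i) hi

theorem mulVec_zero_add_mulVec_last (h0 : 0 < n) (α : Fin n → ℝ) :
    (paperMatrix n).mulVec α ⟨0, h0⟩ +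
        (-1) ^ (n + 1) * (paperMatrix n).mulVec α ⟨n - 1, by omega⟩ =
      2 * α ⟨n - 1, by omega⟩ := by
  obtain ⟨m, rfl⟩ : ∃ m, n = m + 1 := ⟨n - 1, by omega⟩
  simp only [Matrix.mulVec, dotProduct, paperMatrix, Matrix.of_apply, Nat.add_sub_cancel,
    Nat.not_lt_zero, if_false, pow_zero, one_mul, Finset.mul_sum, ← Finset.sum_add_distrib]
  rw [Finset.sum_eq_single ⟨m, m.lt_succ_self⟩]
  · rw [if_neg (lt_irrefl m), ← mul_assoc, ← pow_add, Even.neg_one_pow ⟨m + 1, by ring⟩]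
    ring
  · intro j _ hj
    rw [if_pos ((Nat.lt_succ_iff.mp j.isLt).lt_of_ne (Fin.val_ne_of_ne hj)), ← mul_assoc,
      ← pow_add, Odd.neg_one_pow ⟨m + 1, by ring⟩]
    ring
  · exact fun h => absurd (Finset.mem_univ _) h

variable {α β : Fin n → ℝ}

theorem apply_eq_of_mulVec_eq (hαβ : (paperMatrix n).mulVec α = β) (i : Fin n)
    (h : (i : ℕ) + 1 < n) :
    α i = (β i + β ⟨(i : ℕ) + 1, h⟩) / ((-1) ^ (i : ℕ) * 2) := by
  rw [eq_div_iff (by simp), ← hαβ, mulVec_add_mulVec_succ]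
  ring

theorem apply_last_eq_of_mulVec_eq (h0 : 0 < n) (hαβ : (paperMatrix n).mulVec α = β) :
    α ⟨n - 1, by omega⟩ =
      (β ⟨0, h0⟩ + (-1) ^ (n + 1) * β ⟨n - 1, by omega⟩) / 2 := by
  rw [eq_div_iff two_ne_zero, ← hαβ, mulVec_zero_add_mulVec_last]
  ring

theorem mulVec_injective : Function.Injective (paperMatrix n).mulVec := by
  intro α γ h
  funext i
  by_cases hi : (i : ℕ) + 1 < n
  · rw [apply_eq_of_mulVec_eq (α := α) rfl i hi, apply_eq_of_mulVec_eq h.symm i hi]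
  · rw [show i = ⟨n - 1, by omega⟩ from Fin.ext (by simp only; omega),
      apply_last_eq_of_mulVec_eq (α := α) (by omega) rfl,
      apply_last_eq_of_mulVec_eq (by omega) h.symm]

theorem mulVec_bijective : Function.Bijective (paperMatrix n).mulVec :=
  ⟨mulVec_injective, Matrix.mulVec_surjective_iff_isUnit.mpr
    (Matrix.mulVec_injective_iff_isUnit.mp mulVec_injective)⟩

theorem abs_apply_le_ciSup (hαβ : (paperMatrix n).mulVec α = β) (i : Fin n) :
    |α i| ≤ ⨆ j, |β j| := by
  have hβ : ∀ j, |β j| ≤ ⨆ j, |β j| := le_ciSup (Set.finite_range _).bddAbove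
  by_cases hi : (i : ℕ) + 1 < n
  · rw [apply_eq_of_mulVec_eq hαβ i hi]
    exact abs_add_div_le_of_abs_eq_two (by simp) (hβ _) (hβ _)
  · rw [show i = ⟨n - 1, by omega⟩ from Fin.ext (by simp only; omega),
      apply_last_eq_of_mulVec_eq (by omega) hαβ]
    exact abs_add_div_le_of_abs_eq_two abs_two (hβ _) (by simpa using hβ _)

end paperMatrix

theorem paperMatrix_unique_solution (n : ℕ) (hn : 2 ≤ n) (β : Fin n → ℝ) :
    (∃! α : Fin n → ℝ, (paperMatrix n).mulVec α = β) ∧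
    ∀ α : Fin n → ℝ, (paperMatrix n).mulVec α = β →
      (∀ i : Fin n, ∀ h : (i : ℕ) + 1 < n,
          α i = (β i + β ⟨(i : ℕ) + 1, h⟩) / ((-1) ^ (i : ℕ) * 2)) ∧
      α ⟨n - 1, by omega⟩ =
        (β ⟨0, by omega⟩ + (-1) ^ (n + 1) * β ⟨n - 1, by omega⟩) / 2 ∧
      (⨆ i, |α i|) ≤ ⨆ i, |β i| := by
  have : Nonempty (Fin n) := ⟨⟨0, by omega⟩⟩
  refine ⟨paperMatrix.mulVec_bijective.existsUnique β, fun α hαβ => ⟨?_, ?_, ?_⟩⟩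
  · exact paperMatrix.apply_eq_of_mulVec_eq hαβ
  · exact paperMatrix.apply_last_eq_of_mulVec_eq (by omega) hαβ
  · exact ciSup_le (paperMatrix.abs_apply_le_ciSup hαβ)
end

section
/- There exists a linear isometric embedding Ψ of C([0,1]) (continuous real-valued functions on [0,1] with the supremum norm) into the Banach space of bounded continuous functions ℝ → ℝ (with the supremum norm) such that for every nonzero f ∈ C([0,1]) the image g = Ψ(f) has infinite topological entropy, h_top(g) = ∞. -/
/-!
Fix a sequence `σ` in `[0, 1]` that visits every nonempty open set infinitely often. The function
`Ψ f` is `f` itself on `[2, 3]` (through a window vanishing left of `1`), plus, on each of the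
disjoint blocks `[s n, 2 s n]` accumulating at `0`, with `s n = 4⁻¹ ^ (n + 1)`, the oscillation
`f (σ n) * a n * sin (2π n (x - s n) / s n)`, where `a n = 2⁻¹ ^ (n + 1)`. The window makes `Ψ`
norm-preserving, and the blocks do not increase the norm since their supports are disjoint and
`a n ≤ 1`.

If `f ≠ 0`, then `|f (σ n)| ≥ 2 a n` for infinitely many `n`. For such `n` the oscillation on block
`n` is taller than the block is wide (`s n = a n ^ 2`), so each of its `n` half-waves maps onto the
whole block. These `n` half-waves form a horseshoe with separated branches, and following
arbitrary words of branches gives `n ^ k` separated orbits of length `k`, so the entropy of `Ψ f`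
is at least `log n` for infinitely many `n`.
-/

open BoundedContinuousFunction

open Set Filter Topology Dynamics UniformSpace

section Horseshoe

variable {X : Type*} [PseudoMetricSpace X]

structure IsSeparatedHorseshoe (g : X → X) (δ : ℝ) {d : ℕ} (J : Fin d → Set X) : Prop where
  nonempty : ∀ i, (J i).Nonempty
  subset_image : ∀ i j, J j ⊆ g '' J i
  separated : Pairwise fun i j ↦ ∀ x ∈ J i, ∀ y ∈ J j, δ ≤ dist x y

variable {g : X → X} {δ : ℝ} {d : ℕ} {J : Fin d → Set X}

namespace IsSeparatedHorseshoe

theorem subset_range (h : IsSeparatedHorseshoe g δ J) (i : Fin d) : J i ⊆ range g :=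
  (h.subset_image i i).trans (image_subset_range g _)

theorem exists_itinerary (h : IsSeparatedHorseshoe g δ J) (n : ℕ) (w : ℕ → Fin d) :
    ∃ x, ∀ k ≤ n, g^[k] x ∈ J (w k) := by
  induction n generalizing w with
  | zero => exact (h.nonempty (w 0)).imp fun x hx k hk ↦ by rwa [Nat.le_zero.1 hk]
  | succ n ih =>
    obtain ⟨y, hy⟩ := ih (fun k ↦ w (k + 1))
    obtain ⟨x, hx, rfl⟩ := h.subset_image (w 0) (w 1) (hy 0 n.zero_le)
    refine ⟨x, fun k hk ↦ ?_⟩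
    cases k with
    | zero => exact hx
    | succ k => simpa only [Function.iterate_succ_apply] using hy k (by omega)

end IsSeparatedHorseshoe

theorem disjoint_ball_dynEntourage_of_le_dist {x y : X} {n k : ℕ} (hk : k < n)
    (hxy : δ ≤ dist (g^[k] x) (g^[k] y)) :
    Disjoint (ball x (dynEntourage g {p : X × X | dist p.1 p.2 < δ / 2} n))
      (ball y (dynEntourage g {p : X × X | dist p.1 p.2 < δ / 2} n)) := by
  refine disjoint_left.2 fun z hxz hyz ↦ ?_
  have hx := (mem_dynEntourage.1 hxz) k hk
  have hy := (mem_dynEntourage.1 hyz) k hk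
  simp only [mem_ofPred_eq] at hx hy
  linarith [dist_triangle_right (g^[k] x) (g^[k] y) (g^[k] z)]

namespace IsSeparatedHorseshoe

theorem pow_le_netMaxcard (h : IsSeparatedHorseshoe g δ J) (hδ : 0 < δ) (hd : 0 < d)
    {F : Set X} (hJF : ∀ i, J i ⊆ F) (n : ℕ) :
    (d : ℕ∞) ^ n ≤ netMaxcard g F {p : X × X | dist p.1 p.2 < δ / 2} n := by
  classical
  -- every word of length `n` is followed by some orbit, and distinct words give orbits that are
  -- `δ`-apart at some time `k < n`
  have key (w : Fin n → Fin d) : ∃ x ∈ F, ∀ k : Fin n, g^[k] x ∈ J (w k) := by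
    obtain ⟨x, hx⟩ := h.exists_itinerary n fun k ↦ if hk : k < n then w ⟨k, hk⟩ else ⟨0, hd⟩
    exact ⟨x, hJF _ (hx 0 n.zero_le), fun k ↦ by simpa using hx k k.2.le⟩
  choose pt hptF hpt using key
  have hsep {w w' : Fin n → Fin d} (hne : w ≠ w') :
      ∃ k < n, δ ≤ dist (g^[k] (pt w)) (g^[k] (pt w')) := by
    obtain ⟨k, hk⟩ := Function.ne_iff.1 hne
    exact ⟨k, k.2, h.separated hk _ (hpt w k) _ (hpt w' k)⟩
  have hinj : Function.Injective pt := by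
    intro w w' he
    by_contra hne
    obtain ⟨k, -, hk⟩ := hsep hne
    rw [he, dist_self] at hk
    linarith
  have hnet : IsDynNetIn g F {p : X × X | dist p.1 p.2 < δ / 2} n (Finset.univ.image pt) := by
    refine ⟨by simpa [Set.range_subset_iff] using hptF, ?_⟩
    simp only [Finset.coe_image, Finset.coe_univ, image_univ]
    rintro _ ⟨w, rfl⟩ _ ⟨w', rfl⟩ hne
    obtain ⟨k, hk, hδk⟩ := hsep fun h ↦ hne (congrArg pt h)
    exact disjoint_ball_dynEntourage_of_le_dist hk hδk
  calc (d : ℕ∞) ^ n = (Finset.univ.image pt).card := by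
        rw [Finset.card_image_of_injective _ hinj]; simp
    _ ≤ _ := hnet.card_le_netMaxcard

open ENNReal in
theorem log_le_coverEntropy (h : IsSeparatedHorseshoe g δ J) (hδ : 0 < δ) {F : Set X}
    (hJF : ∀ i, J i ⊆ F) : log d ≤ coverEntropy g F := by
  rcases d.eq_zero_or_pos with rfl | hd
  · simp
  calc log d = ExpGrowth.expGrowthSup fun n ↦ (d : ℝ≥0∞) ^ n := ExpGrowth.expGrowthSup_pow.symm
    _ ≤ netEntropyEntourage g F {p : X × X | dist p.1 p.2 < δ / 2} :=
      ExpGrowth.expGrowthSup_monotone fun n ↦ by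
        simpa [ENat.toENNReal_pow] using ENat.toENNReal_le.2 (h.pow_le_netMaxcard hδ hd hJF n)
    _ ≤ coverEntropy g F :=
      netEntropyEntourage_le_coverEntropy g F (Metric.dist_mem_uniformity (half_pos hδ))

end IsSeparatedHorseshoe

open ENNReal in
theorem coverEntropy_eq_top_of_isSeparatedHorseshoe {F : Set X} (hF : range g ⊆ F)
    (h : ∀ M : ℕ, ∃ d ≥ M, ∃ δ > 0, ∃ J : Fin d → Set X, IsSeparatedHorseshoe g δ J) :
    coverEntropy g F = ⊤ := by
  refine (EReal.eq_top_iff_forall_lt _).2 fun y ↦ ?_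
  obtain ⟨M, hM⟩ := ENNReal.exists_nat_gt (by simp : EReal.exp y ≠ ⊤)
  obtain ⟨d, hMd, δ, hδ, J, hJ⟩ := h M
  calc (y : EReal) = log (EReal.exp y) := (EReal.log_exp _).symm
    _ < log M := log_lt_log_iff.2 hM
    _ ≤ log d := log_le_log_iff.2 (by exact_mod_cast hMd)
    _ ≤ coverEntropy g F := hJ.log_le_coverEntropy hδ fun i ↦ (hJ.subset_range i).trans hF

end Horseshoe

theorem IsSeparatedHorseshoe.of_Icc {g : ℝ → ℝ} {δ : ℝ} {d : ℕ} {u v : Fin d → ℝ}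
    (huv : ∀ i, u i ≤ v i) (hsep : ∀ i j, i < j → v i + δ ≤ u j)
    (hg : ∀ i, ContinuousOn g (Icc (u i) (v i)))
    (hcover : ∀ i j, Icc (u j) (v j) ⊆ uIcc (g (u i)) (g (v i))) :
    IsSeparatedHorseshoe g δ fun i ↦ Icc (u i) (v i) := by
  have hsep' {i j : Fin d} (hij : i < j) {x y : ℝ} (hx : x ∈ Icc (u i) (v i))
      (hy : y ∈ Icc (u j) (v j)) : δ ≤ dist x y := by
    rw [dist_comm, Real.dist_eq]
    linarith [hsep i j hij, hx.2, hy.1, le_abs_self (y - x)]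
  refine ⟨fun i ↦ nonempty_Icc.2 (huv i), fun i j ↦ ?_, fun i j hij x hx y hy ↦ ?_⟩
  · have hIVT := intermediate_value_uIcc (uIcc_of_le (huv i) ▸ hg i)
    rw [uIcc_of_le (huv i)] at hIVT
    exact (hcover i j).trans hIVT
  · rcases hij.lt_or_gt with h | h
    · exact hsep' h hx hy
    · exact dist_comm x y ▸ hsep' h hy hx

open Real

theorem exists_isSeparatedHorseshoe_of_eqOn_sin {g : ℝ → ℝ} {n : ℕ} (hn : 0 < n) {x₀ L A : ℝ}
    (hL : 0 < L) (hg : EqOn g (fun x ↦ A * sin (2 * π * n * ((x - x₀) / L))) (Icc x₀ (x₀ + L)))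
    (hA : Icc x₀ (x₀ + L) ⊆ Icc (-|A|) |A|) :
    ∃ J : Fin n → Set ℝ, IsSeparatedHorseshoe g (L / (2 * n)) J := by
  have hn' : (0 : ℝ) < n := by exact_mod_cast hn
  -- the `i`-th tooth is `x₀ + L • [a i, b i]`, on which `sin (2πnt)` runs from `1` to `-1`
  set a : Fin n → ℝ := fun i ↦ (4 * i + 1) / (4 * n)
  set b : Fin n → ℝ := fun i ↦ (4 * i + 3) / (4 * n)
  have hab (i : Fin n) : 0 ≤ a i ∧ a i ≤ b i ∧ b i ≤ 1 := by
    have hi : (i : ℝ) + 1 ≤ n := by exact_mod_cast i.2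
    refine ⟨by positivity, by simp only [a, b]; gcongr; norm_num, ?_⟩
    rw [div_le_one (by positivity)]
    linarith
  have hmem {t : ℝ} (ht₀ : 0 ≤ t) (ht₁ : t ≤ 1) : x₀ + L * t ∈ Icc x₀ (x₀ + L) :=
    ⟨le_add_of_nonneg_right (mul_nonneg hL.le ht₀), by linarith [mul_le_of_le_one_right hL.le ht₁]⟩
  have hgt {t : ℝ} (ht₀ : 0 ≤ t) (ht₁ : t ≤ 1) : g (x₀ + L * t) = A * sin (2 * π * n * t) := by
    rw [hg (hmem ht₀ ht₁)]
    simp only [add_sub_cancel_left, mul_div_cancel_left₀ _ hL.ne']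
  have hsub (i : Fin n) : Icc (x₀ + L * a i) (x₀ + L * b i) ⊆ Icc x₀ (x₀ + L) :=
    Icc_subset_Icc (hmem (hab i).1 ((hab i).2.1.trans (hab i).2.2)).1
      (hmem ((hab i).1.trans (hab i).2.1) (hab i).2.2).2
  refine ⟨_, IsSeparatedHorseshoe.of_Icc (fun i ↦ by gcongr; exact (hab i).2.1)
    (fun i j hij ↦ ?_) (fun i ↦ (by fun_prop : Continuous _).continuousOn.congr (hg.mono (hsub i)))
    (fun i j ↦ ?_)⟩
  · have hij' : (i : ℝ) + 1 ≤ j := by exact_mod_cast hij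
    simp only [a, b]
    field_simp
    linarith [mul_le_mul_of_nonneg_left hij' hL.le]
  · have hga : g (x₀ + L * a i) = A := by
      rw [hgt (hab i).1 ((hab i).2.1.trans (hab i).2.2),
        show 2 * π * n * a i = π / 2 + (i : ℕ) * (2 * π) by simp only [a]; field_simp; ring,
        sin_add_nat_mul_two_pi, sin_pi_div_two, mul_one]
    have hgb : g (x₀ + L * b i) = -A := by
      rw [hgt ((hab i).1.trans (hab i).2.1) (hab i).2.2,
        show 2 * π * n * b i = π / 2 + π + (i : ℕ) * (2 * π) by simp only [b]; field_simp; ring,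
        sin_add_nat_mul_two_pi, sin_add_pi, sin_pi_div_two, mul_neg, mul_one]
    rw [hga, hgb]
    refine (hsub j).trans (hA.trans ?_)
    rcases le_total 0 A with h | h
    · rw [abs_of_nonneg h, uIcc_of_ge (by linarith)]
    · rw [abs_of_nonpos h, neg_neg, uIcc_of_le (by linarith)]

theorem exists_seq_frequently_mem_of_isOpen (X : Type*) [TopologicalSpace X]
    [TopologicalSpace.SeparableSpace X] [Nonempty X] :
    ∃ σ : ℕ → X, ∀ U : Set X, IsOpen U → U.Nonempty → ∃ᶠ n in atTop, σ n ∈ U := by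
  refine ⟨fun n ↦ TopologicalSpace.denseSeq X n.unpair.1, fun U hU hne ↦ ?_⟩
  obtain ⟨k, hk⟩ := (TopologicalSpace.denseRange_denseSeq X).exists_mem_open hU hne
  exact frequently_atTop.2 fun M ↦ ⟨Nat.pair k M, Nat.right_le_pair k M, by simpa using hk⟩

noncomputable section

namespace EntropyEmbedding

def amp (n : ℕ) : ℝ := 2⁻¹ ^ (n + 1)

def scale (n : ℕ) : ℝ := amp n ^ 2

theorem amp_pos (n : ℕ) : 0 < amp n := by unfold amp; positivity

theorem amp_le_half (n : ℕ) : amp n ≤ 2⁻¹ :=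
  pow_le_of_le_one (by norm_num) (by norm_num) n.succ_ne_zero

theorem two_mul_amp_le {m n : ℕ} (h : m < n) : 2 * amp n ≤ amp m := by
  have hmn : amp n ≤ amp (m + 1) := pow_le_pow_of_le_one (by norm_num) (by norm_num) (by omega)
  have hm : amp (m + 1) = amp m * 2⁻¹ := pow_succ _ _
  linarith

theorem summable_amp : Summable amp :=
  (summable_nat_add_iff 1).2 (summable_geometric_of_lt_one (by norm_num) (by norm_num))

theorem tendsto_amp_atTop : Tendsto amp atTop (𝓝 0) :=
  (tendsto_pow_atTop_nhds_zero_of_lt_one (by norm_num) (by norm_num)).comp (tendsto_add_atTop_nat 1)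

theorem scale_pos (n : ℕ) : 0 < scale n := pow_pos (amp_pos n) 2

theorem two_mul_scale_le_half (n : ℕ) : 2 * scale n ≤ 2⁻¹ := by
  have := amp_le_half n
  have := amp_pos n
  unfold scale
  nlinarith

theorem two_mul_scale_le {m n : ℕ} (h : m < n) : 2 * scale n ≤ scale m := by
  have := two_mul_amp_le h
  have := amp_pos n
  unfold scale
  nlinarith

def ramp (x : ℝ) : ℝ := projIcc (0 : ℝ) 1 zero_le_one x

@[fun_prop]
theorem continuous_ramp : Continuous ramp := continuous_subtype_val.comp continuous_projIcc

theorem ramp_of_nonpos {x : ℝ} (hx : x ≤ 0) : ramp x = 0 := by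
  rw [ramp, projIcc_of_le_left _ hx]

theorem ramp_of_one_le {x : ℝ} (hx : 1 ≤ x) : ramp x = 1 := by
  rw [ramp, projIcc_of_right_le _ hx]

theorem ramp_of_mem {x : ℝ} (hx : x ∈ Icc (0 : ℝ) 1) : ramp x = x := by
  rw [ramp, projIcc_of_mem _ hx]

theorem abs_ramp_le_one (x : ℝ) : |ramp x| ≤ 1 := by
  obtain ⟨h₀, h₁⟩ : ramp x ∈ Icc (0 : ℝ) 1 := (projIcc (0 : ℝ) 1 zero_le_one x).2
  exact abs_le.2 ⟨by linarith, h₁⟩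

def bump (n : ℕ) (x : ℝ) : ℝ := amp n * sin (2 * π * n * ramp ((x - scale n) / scale n))

theorem continuous_bump (n : ℕ) : Continuous (bump n) := by
  unfold bump; fun_prop

theorem bump_eq_zero_of_le {n : ℕ} {x : ℝ} (hx : x ≤ scale n) : bump n x = 0 := by
  rw [bump, ramp_of_nonpos (div_nonpos_of_nonpos_of_nonneg (by linarith) (scale_pos n).le)]
  simp

theorem bump_eq_zero_of_ge {n : ℕ} {x : ℝ} (hx : 2 * scale n ≤ x) : bump n x = 0 := by
  rw [bump, ramp_of_one_le ((one_le_div (scale_pos n)).2 (by linarith)), mul_one,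
    show 2 * π * n = (2 * n : ℕ) * π by push_cast; ring, sin_nat_mul_pi, mul_zero]

theorem bump_eq_of_mem {n : ℕ} {x : ℝ} (hx : x ∈ Icc (scale n) (2 * scale n)) :
    bump n x = amp n * sin (2 * π * n * ((x - scale n) / scale n)) := by
  have := scale_pos n
  rw [bump, ramp_of_mem ⟨div_nonneg (by linarith [hx.1]) this.le,
    (div_le_one this).2 (by linarith [hx.2])⟩]

theorem abs_bump_le (n : ℕ) (x : ℝ) : |bump n x| ≤ amp n := by
  rw [bump, abs_mul, abs_of_pos (amp_pos n)]
  exact mul_le_of_le_one_right (amp_pos n).le (abs_sin_le_one _)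

theorem bump_eq_zero_of_mem_of_ne {m n : ℕ} {x : ℝ} (hx : x ∈ Icc (scale n) (2 * scale n))
    (hmn : m ≠ n) : bump m x = 0 := by
  rcases hmn.lt_or_gt with h | h
  · exact bump_eq_zero_of_le (hx.2.trans (two_mul_scale_le h))
  · exact bump_eq_zero_of_ge ((two_mul_scale_le h).trans hx.1)

theorem exists_forall_ne_bump_eq_zero (x : ℝ) : ∃ n, ∀ m ≠ n, bump m x = 0 := by
  by_cases h : ∃ n, x ∈ Icc (scale n) (2 * scale n)
  · obtain ⟨n, hn⟩ := h
    exact ⟨n, fun m ↦ bump_eq_zero_of_mem_of_ne hn⟩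
  · push Not at h
    refine ⟨0, fun m _ ↦ ?_⟩
    rcases le_or_gt x (scale m) with hx | hx
    · exact bump_eq_zero_of_le hx
    · exact bump_eq_zero_of_ge (le_of_lt (not_le.1 fun h' ↦ h m ⟨hx.le, h'⟩))

def bumpSeries (c : ℕ → ℝ) (x : ℝ) : ℝ := ∑' n, c n * bump n x

theorem bumpSeries_eq {c : ℕ → ℝ} {n : ℕ} {x : ℝ} (h : ∀ m ≠ n, bump m x = 0) :
    bumpSeries c x = c n * bump n x :=
  tsum_eq_single n fun m hm ↦ by rw [h m hm, mul_zero]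

theorem bumpSeries_add (c c' : ℕ → ℝ) (x : ℝ) :
    bumpSeries (c + c') x = bumpSeries c x + bumpSeries c' x := by
  obtain ⟨n, hn⟩ := exists_forall_ne_bump_eq_zero x
  simp only [bumpSeries_eq hn, Pi.add_apply, add_mul]

theorem bumpSeries_smul (a : ℝ) (c : ℕ → ℝ) (x : ℝ) :
    bumpSeries (a • c) x = a * bumpSeries c x := by
  obtain ⟨n, hn⟩ := exists_forall_ne_bump_eq_zero x
  simp only [bumpSeries_eq hn, Pi.smul_apply, smul_eq_mul, mul_assoc]

theorem abs_bumpSeries_le {c : ℕ → ℝ} {C : ℝ} (hc : ∀ n, |c n| ≤ C) (x : ℝ) :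
    |bumpSeries c x| ≤ C := by
  obtain ⟨n, hn⟩ := exists_forall_ne_bump_eq_zero x
  rw [bumpSeries_eq hn, abs_mul]
  have := (abs_bump_le n x).trans (amp_le_half n)
  nlinarith [abs_nonneg (c n), abs_nonneg (bump n x), hc n]

theorem continuous_bumpSeries {c : ℕ → ℝ} {C : ℝ} (hc : ∀ n, |c n| ≤ C) :
    Continuous (bumpSeries c) :=
  continuous_tsum (fun n ↦ continuous_const.mul (continuous_bump n)) (summable_amp.mul_left C)
    fun n x ↦ by
      rw [Real.norm_eq_abs, abs_mul]
      exact mul_le_mul (hc n) (abs_bump_le n x) (abs_nonneg _) ((abs_nonneg _).trans (hc n))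

theorem bumpSeries_eq_zero_of_half_le (c : ℕ → ℝ) {x : ℝ} (hx : 2⁻¹ ≤ x) : bumpSeries c x = 0 := by
  simp [bumpSeries, bump_eq_zero_of_ge ((two_mul_scale_le_half _).trans hx)]

def embedFun (σ : ℕ → unitInterval) (f : C(unitInterval, ℝ)) (x : ℝ) : ℝ :=
  ramp (x - 1) * f (projIcc 0 1 zero_le_one (x - 2)) + bumpSeries (fun n ↦ f (σ n)) x

variable (σ : ℕ → unitInterval) (f : C(unitInterval, ℝ))

theorem abs_apply_le_norm (t : unitInterval) : |f t| ≤ ‖f‖ :=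
  (Real.norm_eq_abs _).symm.trans_le (f.norm_coe_le_norm t)

theorem continuous_embedFun : Continuous (embedFun σ f) :=
  ((continuous_ramp.comp (by fun_prop)).mul
    (f.continuous.comp (continuous_projIcc.comp (by fun_prop)))).add
    (continuous_bumpSeries fun n ↦ abs_apply_le_norm f (σ n))

theorem embedFun_of_le_one {x : ℝ} (hx : x ≤ 1) :
    embedFun σ f x = bumpSeries (fun n ↦ f (σ n)) x := by
  rw [embedFun, ramp_of_nonpos (by linarith), zero_mul, zero_add]

theorem embedFun_of_mem {n : ℕ} {x : ℝ} (hx : x ∈ Icc (scale n) (2 * scale n)) :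
    embedFun σ f x = f (σ n) * bump n x := by
  rw [embedFun_of_le_one σ f (by linarith [hx.2, two_mul_scale_le_half n]),
    bumpSeries_eq fun m ↦ bump_eq_zero_of_mem_of_ne hx]

theorem embedFun_add_two (t : unitInterval) : embedFun σ f (t + 2) = f t := by
  have ht := t.2.1
  rw [embedFun, bumpSeries_eq_zero_of_half_le _ (by linarith), ramp_of_one_le (by linarith),
    add_sub_cancel_right, projIcc_val, one_mul, add_zero]

theorem norm_embedFun_le (x : ℝ) : ‖embedFun σ f x‖ ≤ ‖f‖ := by
  rw [Real.norm_eq_abs]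
  rcases le_total x 1 with hx | hx
  · rw [embedFun_of_le_one σ f hx]
    exact abs_bumpSeries_le (fun n ↦ abs_apply_le_norm f (σ n)) x
  · rw [embedFun, bumpSeries_eq_zero_of_half_le _ (by linarith), add_zero, abs_mul]
    exact mul_le_of_le_one_left (norm_nonneg f) (abs_ramp_le_one _) |>.trans'
      (mul_le_mul_of_nonneg_left (abs_apply_le_norm f _) (abs_nonneg _))

def embedBCF : ℝ →ᵇ ℝ :=
  ofNormedAddCommGroup (embedFun σ f) (continuous_embedFun σ f) ‖f‖ (norm_embedFun_le σ f)

theorem embedBCF_apply (x : ℝ) : embedBCF σ f x = embedFun σ f x := rfl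

theorem norm_embedBCF : ‖embedBCF σ f‖ = ‖f‖ := by
  refine le_antisymm (norm_ofNormedAddCommGroup_le _ (norm_nonneg f) _) <|
    (ContinuousMap.norm_le f (norm_nonneg _)).2 fun t ↦ ?_
  rw [← embedFun_add_two σ f t, ← embedBCF_apply]
  exact norm_coe_le_norm _ _

def embed : C(unitInterval, ℝ) →ₗᵢ[ℝ] (ℝ →ᵇ ℝ) where
  toFun := embedBCF σ
  map_add' f g := by
    ext x
    simp only [embedBCF_apply, coe_add, Pi.add_apply, embedFun, ContinuousMap.add_apply]
    rw [show (fun n ↦ f (σ n) + g (σ n)) = (fun n ↦ f (σ n)) + fun n ↦ g (σ n) from rfl,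
      bumpSeries_add]
    ring
  map_smul' a f := by
    ext x
    simp only [embedBCF_apply, coe_smul, RingHom.id_apply, smul_eq_mul, embedFun,
      ContinuousMap.smul_apply]
    rw [show (fun n ↦ a * f (σ n)) = a • fun n ↦ f (σ n) from rfl, bumpSeries_smul]
    ring
  norm_map' := norm_embedBCF σ

theorem embed_apply (x : ℝ) : embed σ f x = embedFun σ f x := rfl

theorem exists_isSeparatedHorseshoe_embed {n : ℕ} (hn : 0 < n) (hf : 2 * amp n ≤ |f (σ n)|) :
    ∃ δ > 0, ∃ J : Fin n → Set ℝ, IsSeparatedHorseshoe (embed σ f) δ J := by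
  have hs := scale_pos n
  refine ⟨scale n / (2 * n), by positivity,
    exists_isSeparatedHorseshoe_of_eqOn_sin (x₀ := scale n) (A := f (σ n) * amp n) hn hs
      (fun x hx ↦ ?_) ?_⟩
  · rw [← two_mul] at hx
    rw [embed_apply, embedFun_of_mem σ f hx, bump_eq_of_mem hx]
    ring
  · have : 2 * scale n ≤ |f (σ n) * amp n| := by
      rw [abs_mul, abs_of_pos (amp_pos n), scale, sq, ← mul_assoc]
      exact mul_le_mul_of_nonneg_right hf (amp_pos n).le
    exact Icc_subset_Icc (by linarith [abs_nonneg (f (σ n) * amp n)]) (by linarith)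

theorem htop_embed_eq_top
    (hσ : ∀ U : Set unitInterval, IsOpen U → U.Nonempty → ∃ᶠ n in atTop, σ n ∈ U) (hf : f ≠ 0) :
    htop (embed σ f) = ⊤ := by
  obtain ⟨t, ht⟩ := DFunLike.ne_iff.1 hf
  have hc : 0 < |f t| / 2 := by simpa using ht
  have hU := hσ {s | |f t| / 2 < |f s|} (isOpen_lt continuous_const (by fun_prop))
    ⟨t, by simpa using hc⟩
  have hamp := (tendsto_amp_atTop.eventually_lt_const (half_pos hc)).and (eventually_gt_atTop 0)
  refine coverEntropy_eq_top_of_isSeparatedHorseshoe subset_closure fun M ↦ ?_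
  obtain ⟨n, hMn, hn, hamp, hpos⟩ := (hU.and_eventually hamp).forall_exists_of_atTop M
  have hn : |f t| / 2 < |f (σ n)| := hn
  exact ⟨n, hMn, exists_isSeparatedHorseshoe_embed σ f hpos (by linarith)⟩

end EntropyEmbedding

end

theorem exists_isometric_embedding_infinite_entropy :
    ∃ Ψ : C(↥(Set.Icc (0 : ℝ) 1), ℝ) →ₗᵢ[ℝ] (ℝ →ᵇ ℝ),
      ∀ f : C(↥(Set.Icc (0 : ℝ) 1), ℝ), f ≠ 0 → htop (Ψ f) = ⊤ := by
  obtain ⟨σ, hσ⟩ := exists_seq_frequently_mem_of_isOpen unitInterval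
  exact ⟨EntropyEmbedding.embed σ, fun f hf ↦ EntropyEmbedding.htop_embed_eq_top σ f hσ hf⟩
end
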